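/- arXiv:2501.11334 — 12 statements merged into one kernel-verified Lean document; each statement's English description precedes it below -/
import Mathlib

section
/- Let (S,+) be an infinite left weakly cancellative semigroup with no idempotent, and let A be an IP set in S. Then A can be partitioned into countably infinitely many pairwise disjoint sets, each of which is an IP set in S. -/
/-- Sum of `x` over the finite set `H ⊆ ℕ`, taken in increasing order of indices
(with junk value `x 0` when `H = ∅`). -/
def ordSum {S : Type*} [Add S] (x : ℕ → S) (H : Finset ℕ) : S :=
  match H.sort (· ≤ ·) with
  | [] => x 0
  | h :: t => t.foldl (fun s n => s + x n) (x h)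

/-- `FS(⟨x_n⟩) = {∑_{n ∈ H} x_n : H a nonempty finite subset of ℕ}`,
sums in increasing order of indices. -/
def FS {S : Type*} [Add S] (x : ℕ → S) : Set S :=
  {s | ∃ H : Finset ℕ, H.Nonempty ∧ s = ordSum x H}

/-- `A` is an IP set if `FS(⟨x_n⟩) ⊆ A` for some sequence `⟨x_n⟩` in `S`. -/
def IPSet {S : Type*} [Add S] (A : Set S) : Prop :=
  ∃ x : ℕ → S, FS x ⊆ A

/-!
In a left weakly cancellative semigroup without idempotents, `a + d = a` is impossible: the
solutions `d` would form a finite nonempty subsemigroup, and a finite semigroup has an idempotent.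
Hence every tail `{∑_{i ∈ H} x_i : min H > m}` of `FS(x)` is infinite. For finite `P`, left weak
cancellation leaves only finitely many `t` with `t ∈ P` or `a + t ∈ P` for some `a ∈ P`, so one can
choose a sum subsystem `y_n = ∑_{i ∈ H_n} x_i` (blocks `H_0 < H_1 < ⋯`) with `y_n ∉ P_n` and
`P_n + y_n` disjoint from `P_n`, where `P_n = FS(y_0, …, y_{n-1})`. Then a finite sum of the `y_n`
determines its largest index, so along the rows `j ↦ pair k j` of `ℕ × ℕ ≃ ℕ` the sets
`FS(y_{pair k ·})` are pairwise disjoint IP subsets of `A`; the rest of `A` joins one of them.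
-/

open Finset Function

section OrdSum

variable {S : Type*}

lemma ordSum_of_sort_eq_cons [Add S] (x : ℕ → S) {H : Finset ℕ} {a : ℕ} {t : List ℕ}
    (h : H.sort (· ≤ ·) = a :: t) : ordSum x H = t.foldl (fun s n => s + x n) (x a) := by
  rw [ordSum, h]

lemma Finset.Nonempty.exists_sort_eq_cons {H : Finset ℕ} (hH : H.Nonempty) :
    ∃ a t, H.sort (· ≤ ·) = a :: t :=
  List.exists_cons_of_ne_nil (List.ne_nil_of_mem ((mem_sort _).2 hH.choose_spec))

lemma ordSum_singleton [Add S] (x : ℕ → S) (n : ℕ) : ordSum x {n} = x n := by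
  rw [ordSum_of_sort_eq_cons x (sort_singleton _ n)]
  rfl

lemma List.foldl_add_assoc [AddSemigroup S] (x : ℕ → S) (a b : S) (l : List ℕ) :
    l.foldl (fun s n => s + x n) (a + b) = a + l.foldl (fun s n => s + x n) b := by
  induction l generalizing b with
  | nil => rfl
  | cons n l ih => simp only [List.foldl, add_assoc, ih]

lemma Finset.sort_union_of_lt {H H' : Finset ℕ} (h : ∀ i ∈ H, ∀ j ∈ H', i < j) :
    (H ∪ H').sort (· ≤ ·) = H.sort (· ≤ ·) ++ H'.sort (· ≤ ·) := by
  classical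
  have hsorted : (H.sort (· ≤ ·) ++ H'.sort (· ≤ ·)).SortedLT :=
    List.sortedLT_iff_pairwise.2 <| List.pairwise_append.2
      ⟨(sortedLT_sort H).pairwise, (sortedLT_sort H').pairwise,
        fun i hi j hj => h i ((mem_sort _).1 hi) j ((mem_sort _).1 hj)⟩
  rw [← (List.toFinset_sort _ hsorted.nodup).2 hsorted.sortedLE.pairwise, List.toFinset_append,
    sort_toFinset, sort_toFinset]

lemma ordSum_union [AddSemigroup S] (x : ℕ → S) {H H' : Finset ℕ}
    (hH : H.Nonempty) (hH' : H'.Nonempty) (h : ∀ i ∈ H, ∀ j ∈ H', i < j) :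
    ordSum x (H ∪ H') = ordSum x H + ordSum x H' := by
  obtain ⟨a, t, hat⟩ := hH.exists_sort_eq_cons
  obtain ⟨b, u, hbu⟩ := hH'.exists_sort_eq_cons
  have hs : (H ∪ H').sort (· ≤ ·) = a :: (t ++ b :: u) := by
    rw [sort_union_of_lt h, hat, hbu, List.cons_append]
  rw [ordSum_of_sort_eq_cons x hs, ordSum_of_sort_eq_cons x hat, ordSum_of_sort_eq_cons x hbu,
    List.foldl_append, List.foldl_cons, List.foldl_add_assoc]

lemma ordSum_insert_of_lt [AddSemigroup S] (x : ℕ → S) {K : Finset ℕ} {n : ℕ}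
    (hK : K.Nonempty) (h : ∀ i ∈ K, i < n) : ordSum x (insert n K) = ordSum x K + x n := by
  rw [insert_eq, union_comm, ordSum_union x hK (singleton_nonempty n)
    (fun i hi j hj => (mem_singleton.1 hj) ▸ h i hi), ordSum_singleton]

lemma ordSum_biUnion [AddSemigroup S] (x : ℕ → S) {H : ℕ → Finset ℕ} (hne : ∀ n, (H n).Nonempty)
    (hlt : ∀ m n, m < n → ∀ i ∈ H m, ∀ j ∈ H n, i < j) {K : Finset ℕ} (hK : K.Nonempty) :
    ordSum (fun n => ordSum x (H n)) K = ordSum x (K.biUnion H) := by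
  classical
  induction K using Finset.induction_on_max with
  | empty => exact absurd hK not_nonempty_empty
  | insert n K hKn ih =>
    rcases K.eq_empty_or_nonempty with rfl | hK
    · rw [insert_empty, ordSum_singleton, singleton_biUnion]
    have hKH : (K.biUnion H).Nonempty := hK.biUnion fun n _ => hne n
    rw [ordSum_insert_of_lt _ hK hKn, ih hK, biUnion_insert, union_comm,
      ordSum_union x hKH (hne n) fun i hi j hj => ?_]
    obtain ⟨m, hm, him⟩ := mem_biUnion.1 hi
    exact hlt m n (hKn m hm) i him j hj

lemma ordSum_comp_of_strictMono [AddSemigroup S] (y : ℕ → S) {e : ℕ → ℕ} (he : StrictMono e)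
    {K : Finset ℕ} (hK : K.Nonempty) : ordSum (y ∘ e) K = ordSum y (K.image e) := by
  have := ordSum_biUnion y (H := fun n => {e n}) (fun n => singleton_nonempty _)
    (fun m n hmn i hi j hj => by rw [mem_singleton.1 hi, mem_singleton.1 hj]; exact he hmn) hK
  simpa only [ordSum_singleton, biUnion_singleton, Function.comp_def] using this

end OrdSum

section FS

variable {S : Type*} [AddSemigroup S]

lemma FS_subset_of_blocks (x : ℕ → S) {H : ℕ → Finset ℕ} (hne : ∀ n, (H n).Nonempty)
    (hlt : ∀ m n, m < n → ∀ i ∈ H m, ∀ j ∈ H n, i < j) :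
    FS (fun n => ordSum x (H n)) ⊆ FS x := by
  rintro _ ⟨K, hK, rfl⟩
  exact ⟨K.biUnion H, hK.biUnion fun n _ => hne n, ordSum_biUnion x hne hlt hK⟩

lemma FS_comp_subset (y : ℕ → S) {e : ℕ → ℕ} (he : StrictMono e) : FS (y ∘ e) ⊆ FS y := by
  rintro _ ⟨K, hK, rfl⟩
  exact ⟨K.image e, hK.image e, ordSum_comp_of_strictMono y he hK⟩

lemma disjoint_FS_comp {y : ℕ → S}
    (hy : ∀ K K' (hK : K.Nonempty) (hK' : K'.Nonempty),
      ordSum y K = ordSum y K' → K.max' hK = K'.max' hK')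
    {e e' : ℕ → ℕ} (he : StrictMono e) (he' : StrictMono e') (hee' : ∀ i j, e i ≠ e' j) :
    Disjoint (FS (y ∘ e)) (FS (y ∘ e')) := by
  rw [Set.disjoint_left]
  rintro _ ⟨K, hK, rfl⟩ ⟨K', hK', hKK'⟩
  rw [ordSum_comp_of_strictMono y he hK, ordSum_comp_of_strictMono y he' hK'] at hKK'
  have hmax := hy _ _ (hK.image e) (hK'.image e') hKK'
  obtain ⟨i, -, hi⟩ := mem_image.1 (max'_mem _ (hK.image e))
  obtain ⟨j, -, hj⟩ := mem_image.1 (max'_mem _ (hK'.image e'))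
  exact hee' i j (by rw [hi, hj, hmax])

end FS

section WeaklyCancellative

variable {S : Type*} [AddSemigroup S]

lemma Set.Finite.exists_add_self_eq {s : Set S} (hs : s.Finite) (hne : s.Nonempty)
    (hadd : ∀ a ∈ s, ∀ b ∈ s, a + b ∈ s) : ∃ e ∈ s, e + e = e := by
  let _ : TopologicalSpace S := ⊥
  have : DiscreteTopology S := ⟨rfl⟩
  exact exists_idempotent_in_compact_add_subsemigroup (fun _ => continuous_of_discreteTopology)
    s hne hs.isCompact hadd

lemma add_ne_left_of_finite (hlwc : ∀ a b : S, {x : S | a + x = b}.Finite)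
    (hni : ∀ s : S, s + s ≠ s) (a d : S) : a + d ≠ a := by
  intro had
  obtain ⟨e, -, hee⟩ := (hlwc a a).exists_add_self_eq ⟨d, had⟩
    fun t (ht : a + t = a) u (hu : a + u = a) => show a + (t + u) = a by rw [← add_assoc, ht, hu]
  exact hni e hee

lemma infinite_setOf_ordSum_gt (hlwc : ∀ a b : S, {x : S | a + x = b}.Finite)
    (hni : ∀ s : S, s + s ≠ s) (x : ℕ → S) (m : ℕ) :
    {s | ∃ H : Finset ℕ, H.Nonempty ∧ (∀ i ∈ H, m < i) ∧ s = ordSum x H}.Infinite := by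
  let p : ℕ → S := fun k => ordSum x (Ioc m (m + k + 1))
  refine Set.infinite_of_injective_forall_mem (f := p) (.of_lt_imp_ne fun k l hkl hpkl => ?_)
    fun k => ⟨_, nonempty_Ioc.2 (by omega), fun i hi => (mem_Ioc.1 hi).1, rfl⟩
  have hsplit : p l = p k + ordSum x (Ioc (m + k + 1) (m + l + 1)) := by
    rw [← ordSum_union x (nonempty_Ioc.2 (by omega)) (nonempty_Ioc.2 (by omega))
      fun i hi j hj => (mem_Ioc.1 hi).2.trans_lt (mem_Ioc.1 hj).1,
      Ioc_union_Ioc_eq_Ioc (by omega) (by omega)]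
  exact add_ne_left_of_finite hlwc hni (p k) _ (by rw [← hsplit, hpkl])

lemma exists_block (hlwc : ∀ a b : S, {x : S | a + x = b}.Finite)
    (hni : ∀ s : S, s + s ≠ s) (x : ℕ → S) (m : ℕ) (P : Finset S) :
    ∃ H : Finset ℕ, H.Nonempty ∧ (∀ i ∈ H, m < i) ∧
      ordSum x H ∉ P ∧ ∀ a ∈ P, a + ordSum x H ∉ P := by
  have hP := P.finite_toSet
  have hbad : ((P : Set S) ∪ ⋃ a ∈ P, ⋃ b ∈ P, {t | a + t = b}).Finite :=
    hP.union (hP.biUnion fun a _ => hP.biUnion fun b _ => hlwc a b)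
  obtain ⟨_, ⟨H, hne, hgt, rfl⟩, hgood⟩ :=
    ((infinite_setOf_ordSum_gt hlwc hni x m).sdiff hbad).nonempty
  refine ⟨H, hne, hgt, fun h => hgood (.inl h), fun a ha hb => hgood (.inr ?_)⟩
  exact Set.mem_biUnion ha (Set.mem_biUnion hb rfl)

end WeaklyCancellative

namespace SumSubsystem

variable {S : Type*} [AddSemigroup S] [DecidableEq S] (x : ℕ → S) (blk : ℕ → Finset S → Finset ℕ)

/-- After `n` blocks have been chosen: an upper bound for the indices used so far, and the set of
all finite sums of `y_0, …, y_{n-1}`, where `y_k = ordSum x (block x blk k)`. -/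
def state : ℕ → ℕ × Finset S
  | 0 => (0, ∅)
  | n + 1 =>
    let H := blk (state n).1 (state n).2
    (H.sup id, (state n).2 ∪ insert (ordSum x H) ((state n).2.image (· + ordSum x H)))

def block (n : ℕ) : Finset ℕ := blk (state x blk n).1 (state x blk n).2

variable {x blk}

lemma block_lt_block (hne : ∀ m P, (blk m P).Nonempty) (hgt : ∀ m P, ∀ i ∈ blk m P, m < i)
    {m n : ℕ} (hmn : m < n) {i j : ℕ} (hi : i ∈ block x blk m) (hj : j ∈ block x blk n) :
    i < j := by
  have hmono : StrictMono fun k => (state x blk k).1 := strictMono_nat_of_lt_succ fun k => by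
    obtain ⟨l, hl⟩ := hne (state x blk k).1 (state x blk k).2
    exact (hgt _ _ l hl).trans_le (le_sup (f := id) hl)
  calc i ≤ (state x blk (m + 1)).1 := le_sup (f := id) hi
    _ ≤ (state x blk n).1 := hmono.monotone hmn
    _ < j := hgt _ _ j hj

lemma ordSum_mem_state {n : ℕ} {K : Finset ℕ} (hK : K.Nonempty) (hKn : K ⊆ range n) :
    ordSum (fun k => ordSum x (block x blk k)) K ∈ (state x blk n).2 := by
  induction n generalizing K with
  | zero => simp_all
  | succ n ih =>
    rw [range_add_one] at hKn
    simp only [state, mem_union, mem_insert, mem_image]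
    by_cases hnK : n ∈ K
    · rcases (K.erase n).eq_empty_or_nonempty with hKe | hKe
      · obtain rfl : K = {n} := ((erase_eq_empty_iff K n).1 hKe).resolve_left hK.ne_empty
        exact .inr (.inl (ordSum_singleton _ n))
      · rw [← insert_erase hnK, ordSum_insert_of_lt _ hKe fun k hk => mem_range.1
          (subset_insert_iff.1 hKn hk)]
        exact .inr (.inr ⟨_, ih hKe (subset_insert_iff.1 hKn), rfl⟩)
    · exact .inl (ih hK ((subset_insert_iff_of_notMem hnK).1 hKn))

lemma ordSum_notMem_state (hnotin : ∀ m P, ordSum x (blk m P) ∉ P)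
    (hadd : ∀ m P, ∀ a ∈ P, a + ordSum x (blk m P) ∉ P) {K : Finset ℕ} {n : ℕ} (hnK : n ∈ K)
    (hKn : ∀ k ∈ K, k ≤ n) : ordSum (fun k => ordSum x (block x blk k)) K ∉ (state x blk n).2 := by
  rcases (K.erase n).eq_empty_or_nonempty with hKe | hKe
  · obtain rfl : K = {n} := ((erase_eq_empty_iff K n).1 hKe).resolve_left (ne_empty_of_mem hnK)
    rw [ordSum_singleton]
    exact hnotin _ _
  · have hlt : ∀ k ∈ K.erase n, k < n := fun k hk =>
      (hKn k (mem_of_mem_erase hk)).lt_of_ne (ne_of_mem_erase hk)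
    rw [← insert_erase hnK, ordSum_insert_of_lt _ hKe hlt]
    exact hadd _ _ _ (ordSum_mem_state hKe fun k hk => mem_range.2 (hlt k hk))

lemma max'_eq_of_ordSum_eq (hnotin : ∀ m P, ordSum x (blk m P) ∉ P)
    (hadd : ∀ m P, ∀ a ∈ P, a + ordSum x (blk m P) ∉ P) {K K' : Finset ℕ}
    (hK : K.Nonempty) (hK' : K'.Nonempty)
    (h : ordSum (fun k => ordSum x (block x blk k)) K =
      ordSum (fun k => ordSum x (block x blk k)) K') :
    K.max' hK = K'.max' hK' := by
  have key : ∀ {L L'} (hL : L.Nonempty) (hL' : L'.Nonempty), L.max' hL < L'.max' hL' →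
      ordSum (fun k => ordSum x (block x blk k)) L ≠
        ordSum (fun k => ordSum x (block x blk k)) L' := fun {L L'} hL hL' hlt h =>
    ordSum_notMem_state hnotin hadd (L'.max'_mem hL') (L'.le_max' · ·) <|
      h ▸ ordSum_mem_state hL fun k hk => mem_range.2 ((L.le_max' k hk).trans_lt hlt)
  by_contra hne
  rcases lt_or_gt_of_ne hne with hlt | hlt
  exacts [key hK hK' hlt h, key hK' hK hlt h.symm]

end SumSubsystem

theorem exists_FS_subset_max'_eq_of_ordSum_eq {S : Type*} [AddSemigroup S]
    (hlwc : ∀ a b : S, {x : S | a + x = b}.Finite) (hni : ∀ s : S, s + s ≠ s) (x : ℕ → S) :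
    ∃ y : ℕ → S, FS y ⊆ FS x ∧ ∀ K K' (hK : K.Nonempty) (hK' : K'.Nonempty),
      ordSum y K = ordSum y K' → K.max' hK = K'.max' hK' := by
  classical
  choose blk hne hgt hnotin hadd using exists_block hlwc hni x
  exact ⟨_, FS_subset_of_blocks x (fun n => hne _ _) fun m n hmn _ hi _ hj =>
    SumSubsystem.block_lt_block hne hgt hmn hi hj,
    fun K K' hK hK' => SumSubsystem.max'_eq_of_ordSum_eq hnotin hadd hK hK'⟩

lemma Set.exists_iUnion_eq_pairwise_disjoint_superset {α : Type*} {A : Set α} {C : ℕ → Set α}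
    (hCA : ∀ n, C n ⊆ A) (hC : Pairwise (Disjoint on C)) :
    ∃ B : ℕ → Set α, ⋃ n, B n = A ∧ Pairwise (Disjoint on B) ∧ ∀ n, C n ⊆ B n := by
  let B : ℕ → Set α := fun n => Nat.casesOn n (A \ ⋃ m, C (m + 1)) fun m => C (m + 1)
  refine ⟨B, subset_antisymm (iUnion_subset fun n => ?_) fun a ha => ?_, fun m n hmn => ?_,
    fun n => ?_⟩
  · cases n
    exacts [sdiff_subset, hCA _]
  · by_cases h : a ∈ ⋃ m, C (m + 1)
    · obtain ⟨m, hm⟩ := mem_iUnion.1 h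
      exact mem_iUnion.2 ⟨m + 1, hm⟩
    · exact mem_iUnion.2 ⟨0, ha, h⟩
  · have hdiff : ∀ m, Disjoint (B 0) (B (m + 1)) := fun m =>
      disjoint_sdiff_left.mono_right (subset_iUnion (fun m => C (m + 1)) m)
    cases m <;> cases n
    exacts [absurd rfl hmn, hdiff _, (hdiff _).symm, hC fun h => hmn (by rw [h])]
  · cases n
    exacts [subset_sdiff.2 ⟨hCA 0, disjoint_iUnion_right.2 fun m => hC (by omega)⟩, subset_rfl]

theorem stmt0_general {S : Type*} [AddSemigroup S]
    (hlwc : ∀ a b : S, {x : S | a + x = b}.Finite)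
    (hni : ∀ s : S, s + s ≠ s)
    (A : Set S) (hA : IPSet A) :
    ∃ B : ℕ → Set S, (⋃ n, B n) = A ∧
      (∀ m n : ℕ, m ≠ n → Disjoint (B m) (B n)) ∧
      ∀ n, IPSet (B n) := by
  obtain ⟨x, hxA⟩ := hA
  obtain ⟨y, hyx, hy⟩ := exists_FS_subset_max'_eq_of_ordSum_eq hlwc hni x
  have hpair : ∀ n, StrictMono (Nat.pair n) := fun n _ _ => Nat.pair_lt_pair_right n
  obtain ⟨B, hBA, hB, hCB⟩ := Set.exists_iUnion_eq_pairwise_disjoint_superset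
    (C := fun n => FS (y ∘ Nat.pair n))
    (fun n => (FS_comp_subset y (hpair n)).trans (hyx.trans hxA))
    fun m n hmn => disjoint_FS_comp hy (hpair m) (hpair n)
      fun i j hij => hmn (Nat.pair_eq_pair.1 hij).1
  exact ⟨B, hBA, hB, fun n => ⟨_, hCB n⟩⟩

/-- If `(S,+)` is an infinite left weakly cancellative semigroup with no
idempotent and `A` is an IP set in `S`, then `A` can be partitioned into countably infinitely
many pairwise disjoint IP sets. -/
theorem stmt0 {S : Type*} [AddSemigroup S] [Infinite S]
    (hlwc : ∀ a b : S, {x : S | a + x = b}.Finite)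
    (hni : ∀ s : S, s + s ≠ s)
    (A : Set S) (hA : IPSet A) :
    ∃ B : ℕ → Set S, (⋃ n, B n) = A ∧
      (∀ m n : ℕ, m ≠ n → Disjoint (B m) (B n)) ∧
      ∀ n, IPSet (B n) :=
  stmt0_general hlwc hni A hA
end

section
/- Let (S,+) be an uncountable semigroup with no idempotent. Then the following are equivalent: (1) every uncountable IP set in S can be partitioned into uncountably many pairwise disjoint sets each of which is an IP set in S; (2) every uncountable subset of S is an IP set in S. -/
lemma FS_countable {S : Type*} [Add S] (x : ℕ → S) : (FS x).Countable := by
  have : FS x ⊆ Set.range (ordSum x) := by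
    rintro s ⟨H, -, rfl⟩; exact ⟨H, rfl⟩
  exact (Set.countable_range _).mono this

lemma FS_nonempty {S : Type*} [Add S] (x : ℕ → S) : (FS x).Nonempty :=
  ⟨ordSum x {0}, {0}, Finset.singleton_nonempty 0, rfl⟩

lemma IPSet.nonempty {S : Type*} [Add S] {A : Set S} (h : IPSet A) : A.Nonempty := by
  obtain ⟨x, hx⟩ := h
  exact (FS_nonempty x).mono hx

/-- Let `(S,+)` be an uncountable semigroup with no idempotent. Then every
uncountable IP set in `S` can be partitioned into uncountably many pairwise disjoint IP sets
if and only if every uncountable subset of `S` is an IP set. -/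
theorem stmt4 {S : Type*} [AddSemigroup S] [Uncountable S]
    (hni : ∀ s : S, s + s ≠ s) :
    (∀ A : Set S, IPSet A → ¬A.Countable →
        ∃ 𝒞 : Set (Set S), ¬𝒞.Countable ∧ (∀ C ∈ 𝒞, IPSet C) ∧
          𝒞.PairwiseDisjoint id ∧ ⋃₀ 𝒞 = A) ↔
      ∀ A : Set S, ¬A.Countable → IPSet A := by
  classical
  constructor
  · -- partition property ⇒ every uncountable set is IP
    intro h A hA
    obtain ⟨s0, hs0⟩ : A.Nonempty :=
      Set.nonempty_iff_ne_empty.mpr (by rintro rfl; exact hA Set.countable_empty)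
    set x : ℕ → S := fun _ => s0 with hx
    set B := FS x ∪ A with hB
    obtain ⟨𝒞, h𝒞u, h𝒞IP, h𝒞d, h𝒞U⟩ :=
      h B ⟨x, Set.subset_union_left⟩
        (fun h' => hA (h'.mono Set.subset_union_right))
    set T := {C ∈ 𝒞 | (C ∩ FS x).Nonempty} with hT
    have hTc : T.Countable := by
      haveI : Countable ↥(FS x) := (FS_countable x).to_subtype
      have hinj : Function.Injective
          (fun C : ↥T => (⟨C.2.2.choose, C.2.2.choose_spec.2⟩ : ↥(FS x))) := by
        intro C1 C2 hEq
        have hv : C1.2.2.choose = C2.2.2.choose := congrArg Subtype.val hEq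
        by_contra hne
        have hne' : C1.1 ≠ C2.1 := fun h' => hne (Subtype.ext h')
        have hd := h𝒞d C1.2.1 C2.2.1 hne'
        exact (Set.disjoint_left.mp hd C1.2.2.choose_spec.1)
          (hv ▸ C2.2.2.choose_spec.1)
      exact Set.countable_coe_iff.mp hinj.countable
    obtain ⟨C, hC𝒞, hCT⟩ := Set.not_subset.mp
      (fun hsub => h𝒞u (hTc.mono hsub))
    have hCne : ¬(C ∩ FS x).Nonempty := fun hn => hCT ⟨hC𝒞, hn⟩
    have hCA : C ⊆ A := by
      intro s hs
      have hsB : s ∈ B := h𝒞U ▸ ⟨C, hC𝒞, hs⟩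
      rcases hsB with hsF | hsA
      · exact absurd ⟨s, hs, hsF⟩ hCne
      · exact hsA
    obtain ⟨y, hy⟩ := h𝒞IP C hC𝒞
    exact ⟨y, hy.trans hCA⟩
  · -- every uncountable set is IP ⇒ partition property
    intro h A _ hA
    have hU : Uncountable ↥A := by
      rw [← not_countable_iff]
      exact fun hc => hA (Set.countable_coe_iff.mp hc)
    haveI := hU
    obtain ⟨e⟩ : Nonempty (↥A ≃ ↥A × ↥A) := by
      rw [← Cardinal.eq, Cardinal.mk_prod]
      simp only [Cardinal.lift_id]
      exact (Cardinal.mul_eq_self (Cardinal.aleph0_le_mk _)).symm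
    set C : ↥A → Set S := fun a => {s : S | ∃ h : s ∈ A, (e ⟨s, h⟩).1 = a} with hC
    have hmem : ∀ a b : ↥A, ((e.symm (a, b) : ↥A) : S) ∈ C a := by
      intro a b
      refine ⟨(e.symm (a, b)).2, ?_⟩
      have h1 : (⟨((e.symm (a, b) : ↥A) : S), (e.symm (a, b)).2⟩ : ↥A) = e.symm (a, b) := rfl
      rw [h1, e.apply_symm_apply]
    have hCsub : ∀ a, C a ⊆ A := fun a s hs => hs.1
    have hCdisj : ∀ a b, a ≠ b → Disjoint (C a) (C b) := by
      intro a b hab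
      rw [Set.disjoint_left]
      rintro s ⟨h1, e1⟩ ⟨h2, e2⟩
      exact hab (e1.symm.trans e2)
    have hCu : ∀ a, ¬(C a).Countable := by
      intro a hc
      haveI : Countable ↥(C a) := hc.to_subtype
      have hinj : Function.Injective
          (fun b : ↥A => (⟨((e.symm (a, b) : ↥A) : S), hmem a b⟩ : ↥(C a))) := by
        intro b b' hbb
        have hv : ((e.symm (a, b) : ↥A) : S) = ((e.symm (a, b') : ↥A) : S) :=
          congrArg (Subtype.val : ↥(C a) → S) hbb
        have h1 : (e.symm (a, b) : ↥A) = e.symm (a, b') := Subtype.ext hv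
        have := e.symm.injective h1
        exact (Prod.ext_iff.mp this).2
      exact hA (Set.countable_coe_iff.mp hinj.countable)
    have hCinj : Function.Injective C := by
      intro a a' hEq
      by_contra hne
      have h2 : ((e.symm (a, a) : ↥A) : S) ∈ C a' := by rw [← hEq]; exact hmem a a
      exact (Set.disjoint_left.mp (hCdisj a a' hne) (hmem a a)) h2
    refine ⟨Set.range C, ?_, ?_, ?_, ?_⟩
    · intro hc
      haveI : Countable ↥(Set.range C) := hc.to_subtype
      have hinj : Function.Injective
          (fun a : ↥A => (⟨C a, Set.mem_range_self a⟩ : ↥(Set.range C))) := by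
        intro a a' hEq
        exact hCinj (congrArg Subtype.val hEq)
      exact hA (Set.countable_coe_iff.mp hinj.countable)
    · rintro D ⟨a, rfl⟩
      exact h (C a) (hCu a)
    · rintro D ⟨a, rfl⟩ D' ⟨a', rfl⟩ hne
      exact hCdisj a a' (fun h' => hne (h' ▸ rfl))
    · ext s
      constructor
      · rintro ⟨D, ⟨a, rfl⟩, hs⟩
        exact hCsub a hs
      · intro hs
        exact ⟨C ((e ⟨s, hs⟩).1), Set.mem_range_self _, hs, rfl⟩
end

section
/- There exists a commutative semigroup (S,⊕) of cardinality ℵ₁ such that S has no idempotent, S is very weakly cancellative, and every uncountable subset of S is an IP set in S. -/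
/-- `S` is very weakly cancellative: any union of fewer than `|S|` left solution sets
`{x : a + x = b}`, and any union of fewer than `|S|` right solution sets `{x : x + a = b}`,
has cardinality less than `|S|`. -/
def VeryWeaklyCancellative (S : Type) [Add S] : Prop :=
  (∀ P : Set (S × S), Cardinal.mk P < Cardinal.mk S →
    Cardinal.mk (⋃ z ∈ P, {x : S | z.1 + x = z.2}) < Cardinal.mk S) ∧
  (∀ P : Set (S × S), Cardinal.mk P < Cardinal.mk S →
    Cardinal.mk (⋃ z ∈ P, {x : S | x + z.1 = z.2}) < Cardinal.mk S)

section FiniteSums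

variable {S : Type*} [Add S] {x : ℕ → S}

theorem foldl_add_eq_getLast (hx : ∀ ⦃m n⦄, m < n → x m + x n = x n) :
    ∀ (a : ℕ) (l : List ℕ), (a :: l).Pairwise (· < ·) →
      l.foldl (fun s n => s + x n) (x a) = x ((a :: l).getLast (List.cons_ne_nil a l))
  | _, [], _ => rfl
  | a, b :: l, hl => by
    rw [List.foldl_cons, hx (List.rel_of_pairwise_cons hl List.mem_cons_self),
      foldl_add_eq_getLast hx b l (List.Pairwise.of_cons hl),
      List.getLast_cons (List.cons_ne_nil b l)]

theorem FS_subset_range (hx : ∀ ⦃m n⦄, m < n → x m + x n = x n) : FS x ⊆ Set.range x := by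
  rintro _ ⟨H, hH, rfl⟩
  obtain ⟨a, l, hal⟩ : ∃ a l, H.sort (· ≤ ·) = a :: l :=
    List.exists_cons_of_ne_nil <| List.ne_nil_of_length_pos <|
      (H.length_sort (· ≤ ·)).symm ▸ hH.card_pos
  have hsorted : (a :: l).Pairwise (· < ·) := hal ▸ (Finset.sortedLT_sort H).pairwise
  rw [ordSum, hal]
  exact ⟨_, (foldl_add_eq_getLast hx a l hsorted).symm⟩

end FiniteSums

section Countability

open Cardinal Set

theorem veryWeaklyCancellative_of_countable_setOf_add_eq {S : Type} [AddCommMagma S]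
    (hS : #S = ℵ₁) (h : ∀ a b : S, {x | a + x = b}.Countable) : VeryWeaklyCancellative S := by
  have hleft : ∀ P : Set (S × S), #P < #S → #(⋃ z ∈ P, {x | z.1 + x = z.2}) < #S := by
    simp only [hS, lt_aleph_one_iff, le_aleph0_iff_set_countable]
    exact fun P hP => hP.biUnion fun z _ => h z.1 z.2
  refine ⟨hleft, fun P hP => ?_⟩
  simpa only [add_comm] using hleft P hP

theorem countable_Iic_toType_ord_aleph_one (i : (ℵ₁ : Cardinal.{0}).ord.ToType) :
    (Iic i).Countable := by
  have hIio : #(Iio i) < ℵ₁ := by simpa using mk_Iio_lt i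
  rw [← Iio_insert]
  exact (le_aleph0_iff_set_countable.1 (lt_aleph_one_iff.1 hIio)).insert i

end Countability

structure OrdinalSum (α T : Type*) where
  level : α
  val : T

namespace OrdinalSum

open Cardinal Set

universe u v

variable {α : Type u} {T : Type v}

def equivProd : OrdinalSum α T ≃ α × T where
  toFun a := (a.level, a.val)
  invFun p := ⟨p.1, p.2⟩

theorem mk_eq [Countable T] [Nonempty T] (hα : ℵ₀ ≤ #α) : #(OrdinalSum α T) = lift.{v} #α := by
  rw [mk_congr equivProd, mk_prod, Cardinal.mul_eq_left (aleph0_le_lift.2 hα)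
    ((lift_le_aleph0.2 mk_le_aleph0).trans (aleph0_le_lift.2 hα))
    (mt lift_eq_zero.1 (mk_ne_zero T))]

variable [LinearOrder α]

section Add

variable [Add T]

instance : Add (OrdinalSum α T) :=
  ⟨fun a b => if a.level < b.level then b else if b.level < a.level then a
    else ⟨a.level, a.val + b.val⟩⟩

theorem add_of_lt {a b : OrdinalSum α T} (h : a.level < b.level) : a + b = b :=
  if_pos h

theorem add_of_gt {a b : OrdinalSum α T} (h : b.level < a.level) : a + b = a :=
  (if_neg h.not_gt).trans (if_pos h)

theorem add_of_level_eq {a b : OrdinalSum α T} (h : a.level = b.level) :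
    a + b = ⟨a.level, a.val + b.val⟩ :=
  (if_neg h.not_lt).trans (if_neg h.symm.not_lt)

theorem add_self_ne (h : ∀ t : T, t + t ≠ t) (a : OrdinalSum α T) : a + a ≠ a := by
  rw [add_of_level_eq rfl]
  exact fun ha => h a.val congr(OrdinalSum.val $ha)

end Add

instance [AddSemigroup T] : AddSemigroup (OrdinalSum α T) where
  add_assoc a b c := by
    rcases lt_trichotomy a.level b.level with hab | hab | hab <;>
      rcases lt_trichotomy b.level c.level with hbc | hbc | hbc
    · rw [add_of_lt hab, add_of_lt hbc, add_of_lt (hab.trans hbc)]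
    · rw [add_of_lt hab, add_of_level_eq hbc]
      exact (add_of_lt (b := ⟨b.level, b.val + c.val⟩) hab).symm
    · rw [add_of_lt hab, add_of_gt hbc, add_of_lt hab]
    · rw [add_of_level_eq hab, add_of_lt hbc,
        add_of_lt (a := ⟨a.level, a.val + b.val⟩) (hab ▸ hbc), add_of_lt (hab ▸ hbc)]
    · rw [add_of_level_eq hab, add_of_level_eq hbc,
        add_of_level_eq (a := ⟨a.level, a.val + b.val⟩) (hab.trans hbc),
        add_of_level_eq (b := ⟨b.level, b.val + c.val⟩) hab, add_assoc]
    · rw [add_of_level_eq hab, add_of_gt hbc, add_of_level_eq hab]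
      exact add_of_gt (hab ▸ hbc)
    · rw [add_of_gt hab, add_of_lt hbc]
    · rw [add_of_gt hab, add_of_level_eq hbc, add_of_gt (b := ⟨b.level, b.val + c.val⟩) hab,
        add_of_gt (hbc ▸ hab)]
    · rw [add_of_gt hab, add_of_gt hbc, add_of_gt (hbc.trans hab), add_of_gt hab]

instance [AddCommSemigroup T] : AddCommSemigroup (OrdinalSum α T) where
  add_comm a b := by
    rcases lt_trichotomy a.level b.level with h | h | h
    · rw [add_of_lt h, add_of_gt h]
    · rw [add_of_level_eq h, add_of_level_eq h.symm, h, add_comm]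
    · rw [add_of_gt h, add_of_lt h]

theorem countable_setOf_level_le [Countable T] {i : α} (hi : (Iic i).Countable) :
    {x : OrdinalSum α T | x.level ≤ i}.Countable :=
  (hi.prod countable_univ).preimage equivProd.injective |>.mono fun _ hx =>
    mk_mem_prod (β := T) hx (mem_univ _)

theorem eq_or_level_le_of_add_eq [Add T] {a b x : OrdinalSum α T} (h : a + x = b) :
    x = b ∨ x.level ≤ a.level :=
  (lt_or_ge a.level x.level).imp (fun hlt => (add_of_lt hlt).symm.trans h) id

theorem countable_setOf_add_eq [Add T] [Countable T] (hα : ∀ i : α, (Iic i).Countable)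
    (a b : OrdinalSum α T) : {x | a + x = b}.Countable :=
  ((countable_setOf_level_le (hα a.level)).insert b).mono fun _ => eq_or_level_le_of_add_eq

theorem isIPSet_of_not_countable [Add T] [Countable T] (hα : ∀ i : α, (Iic i).Countable)
    {A : Set (OrdinalSum α T)} (hA : ¬A.Countable) : IPSet A := by
  obtain ⟨a₀, ha₀⟩ : A.Nonempty :=
    nonempty_iff_ne_empty.2 fun h => hA (h ▸ countable_empty)
  have hunbdd : ∀ i, ∃ a ∈ A, i < a.level := fun i => by
    by_contra! h
    exact hA ((countable_setOf_level_le (hα i)).mono h)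
  choose next hnext_mem hnext_lt using hunbdd
  let x (n : ℕ) : OrdinalSum α T := (fun a => next a.level)^[n] a₀
  have hx_succ (n : ℕ) : x (n + 1) = next (x n).level := Function.iterate_succ_apply' _ _ _
  have hx_mem : ∀ n, x n ∈ A
    | 0 => ha₀
    | n + 1 => hx_succ n ▸ hnext_mem _
  have hx_mono : StrictMono fun n => (x n).level :=
    strictMono_nat_of_lt_succ fun n => hx_succ n ▸ hnext_lt _
  exact ⟨x, (FS_subset_range fun _ _ hmn => add_of_lt (hx_mono hmn)).trans
    (range_subset_iff.2 hx_mem)⟩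

end OrdinalSum

/-- There is a commutative semigroup of cardinality `ℵ₁` with no idempotent
which is very weakly cancellative and in which every uncountable subset is an IP set. -/
theorem stmt5 :
    ∃ (S : Type) (_ : AddCommSemigroup S),
      Cardinal.mk S = Cardinal.aleph 1 ∧
      (∀ s : S, s + s ≠ s) ∧
      VeryWeaklyCancellative S ∧
      (∀ A : Set S, ¬A.Countable → IPSet A) := by
  have hα := countable_Iic_toType_ord_aleph_one
  have hcard : Cardinal.mk (OrdinalSum (Cardinal.aleph 1).ord.ToType ℕ+) = Cardinal.aleph 1 := by
    rw [OrdinalSum.mk_eq ((Cardinal.aleph0_le_aleph 1).trans_eq (Cardinal.mk_ord_toType _).symm),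
      Cardinal.lift_id, Cardinal.mk_ord_toType]
  exact ⟨OrdinalSum (Cardinal.aleph 1).ord.ToType ℕ+, inferInstance, hcard,
    OrdinalSum.add_self_ne fun n => (PNat.lt_add_right n n).ne',
    veryWeaklyCancellative_of_countable_setOf_add_eq hcard (OrdinalSum.countable_setOf_add_eq hα),
    fun _ => OrdinalSum.isIPSet_of_not_countable hα⟩
end

section
/- Let (S,+) be a semigroup of cardinality κ > ℵ₀, let μ be a cardinal with ℵ₀ < μ ≤ κ, and suppose there exists a family of λ subsets of a set of cardinality μ, each of cardinality μ, whose pairwise intersections have cardinality less than μ. If A is an IP set in S with |A| = μ, then there is a family ⟨B_α⟩_{α < λ} of λ subsets of A such that each B_α is an IP set in S of cardinality μ and |B_α ∩ B_β| < μ whenever α ≠ β. -/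
/-- Let `(S,+)` be a semigroup of cardinality `κ > ℵ₀`, let `ℵ₀ < μ ≤ κ`,
and suppose some set `X` of cardinality `μ` admits a family `⟨D_i⟩_{i ∈ ι}` (`|ι| = λ`) of
subsets of cardinality `μ` whose pairwise intersections have cardinality `< μ`. If `A` is an
IP set in `S` of cardinality `μ`, then `A` contains a family `⟨B_i⟩_{i ∈ ι}` of IP subsets of
cardinality `μ` whose pairwise intersections have cardinality `< μ`. -/
theorem stmt6 {S : Type} [AddSemigroup S] (μ : Cardinal.{0})
    (hκ : Cardinal.aleph0 < Cardinal.mk S)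
    (hμ0 : Cardinal.aleph0 < μ) (hμκ : μ ≤ Cardinal.mk S)
    (ι X : Type) (hX : Cardinal.mk X = μ)
    (D : ι → Set X) (hD : ∀ i, Cardinal.mk (D i) = μ)
    (hDad : ∀ i j, i ≠ j → Cardinal.mk ((D i ∩ D j : Set X)) < μ)
    (A : Set S) (hA : IPSet A) (hAμ : Cardinal.mk A = μ) :
    ∃ B : ι → Set S,
      (∀ i, B i ⊆ A ∧ IPSet (B i) ∧ Cardinal.mk (B i) = μ) ∧
      (∀ i j, i ≠ j → Cardinal.mk ((B i ∩ B j : Set S)) < μ) := by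
  obtain ⟨x, hx⟩ := hA
  -- an equiv X ≃ A
  obtain ⟨e⟩ : Nonempty (X ≃ A) := Cardinal.eq.mp (hX.trans hAμ.symm)
  set f : X → S := fun d => (e d : S) with hf
  have hfinj : Function.Injective f :=
    Subtype.val_injective.comp e.injective
  have hFScount : Cardinal.mk (FS x) ≤ Cardinal.aleph0 := by
    have hsub : FS x ⊆ Set.range (fun H : Finset ℕ => ordSum x H) := by
      rintro s ⟨H, -, rfl⟩
      exact ⟨H, rfl⟩
    calc Cardinal.mk (FS x) ≤ Cardinal.mk (Set.range (fun H : Finset ℕ => ordSum x H)) :=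
          Cardinal.mk_le_mk_of_subset hsub
      _ ≤ Cardinal.mk (Finset ℕ) := Cardinal.mk_range_le
      _ ≤ Cardinal.aleph0 := Cardinal.mk_le_aleph0
  refine ⟨fun i => FS x ∪ f '' (D i), fun i => ?_, fun i j hij => ?_⟩
  · refine ⟨?_, ⟨x, Set.subset_union_left⟩, ?_⟩
    · rintro s (hs | ⟨d, -, rfl⟩)
      · exact hx hs
      · exact (e d).2
    · apply le_antisymm
      · calc Cardinal.mk (FS x ∪ f '' (D i) : Set S)
            ≤ Cardinal.mk (FS x) + Cardinal.mk (f '' (D i)) := Cardinal.mk_union_le _ _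
          _ ≤ Cardinal.aleph0 + μ := by
              refine add_le_add hFScount ?_
              rw [Cardinal.mk_image_eq hfinj, hD i]
          _ = μ := Cardinal.add_eq_right hμ0.le hμ0.le
      · calc μ = Cardinal.mk (f '' (D i)) := by rw [Cardinal.mk_image_eq hfinj, hD i]
          _ ≤ _ := Cardinal.mk_le_mk_of_subset Set.subset_union_right
  · have hsub : (FS x ∪ f '' (D i)) ∩ (FS x ∪ f '' (D j)) ⊆
        FS x ∪ f '' (D i ∩ D j) := by
      rintro s ⟨(h1 | ⟨d1, hd1, rfl⟩), h2⟩
      · exact Or.inl h1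
      · rcases h2 with h2 | ⟨d2, hd2, he⟩
        · exact Or.inl h2
        · exact Or.inr ⟨d1, ⟨hd1, hfinj he ▸ hd2⟩, rfl⟩
    calc Cardinal.mk ((FS x ∪ f '' (D i)) ∩ (FS x ∪ f '' (D j)) : Set S)
        ≤ Cardinal.mk (FS x ∪ f '' (D i ∩ D j) : Set S) := Cardinal.mk_le_mk_of_subset hsub
      _ ≤ Cardinal.mk (FS x) + Cardinal.mk (f '' (D i ∩ D j)) := Cardinal.mk_union_le _ _
      _ < μ := by
          apply Cardinal.add_lt_of_lt hμ0.le (hFScount.trans_lt hμ0)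
          rw [Cardinal.mk_image_eq hfinj]
          exact hDad i j hij
end

section
/- Let ⟨r_n⟩_{n=1}^∞ be a sequence in ℕ and let 𝒰 = ⋃_{n=1}^∞ P_n(^{r_n}ℕ). Then: (i) there is a family ⟨B_α⟩_{α < 2^{ℵ₀}} of infinite subsets of 𝒰 with B_α ∩ B_β finite whenever α ≠ β, such that for each α < 2^{ℵ₀} and each L ∈ 𝒰 there exist L′ ∈ B_α and a ∈ ℕ with L′ = L + a; and (ii) there is a countably infinite family of pairwise disjoint infinite subsets of 𝒰 with the same property, namely each member B of the family satisfies: for every L ∈ 𝒰 there exist L′ ∈ B and a ∈ ℕ with L′ = L + a. -/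
/- Here the positive integers are encoded inside Lean's `ℕ`: a function
`{1,…,m} → ℕ⁺` of length `m` is encoded as a list of positive naturals of length `m`,
and a member of `P_n(^{r_n}ℕ)` as a finite set of such lists. -/

/-- `L ∈ ⋃_{n=1}^∞ P_n(^{r_n}ℕ)`: for some positive `n`, `L` is a set of `n` sequences of
positive integers of length `r n`. -/
def IsUElem (r : ℕ → ℕ) (L : Finset (List ℕ)) : Prop :=
  ∃ n : ℕ, 0 < n ∧ L.card = n ∧ ∀ l ∈ L, l.length = r n ∧ ∀ x ∈ l, 0 < x

/-- `L + a`, the translate of every function in `L` by `a`. -/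
def listTrans (a : ℕ) (L : Finset (List ℕ)) : Finset (List ℕ) :=
  L.image (List.map (· + a))

/-!
Enumerate `𝒰` as `e₀, e₁, …`. For `S ⊆ ℕ` let `B(S)` consist of the translates of the `e_k`
whose least entry is some `t ∈ S` with `k < t`. When `S` is infinite, every `L ∈ 𝒰` has a
translate in `B(S)`. The least entry of a member of `B(S)` recovers `t`, and each `t` comes
from only the finitely many `k < t`; so `B` sends disjoint sets to disjoint families and
almost disjoint sets to almost disjoint families. It remains to take `2^ℵ₀` almost disjoint
infinite subsets of `ℕ` (the codes of the initial segments of each `α ⊆ ℕ`) and countably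
many disjoint infinite ones (the fibres of `Nat.pair`).
-/

lemma Nat.sInf_image_add {s : Set ℕ} (hs : s.Nonempty) (a : ℕ) :
    sInf ((· + a) '' s) = sInf s + a :=
  le_antisymm (Nat.sInf_le ⟨_, Nat.sInf_mem hs, rfl⟩)
    (le_csInf (hs.image _) fun _ ⟨_, hx, hy⟩ => hy ▸ Nat.add_le_add_right (Nat.sInf_le hx) a)

lemma injective_of_infinite_of_inter_finite {ι α : Type*} {B : ι → Set α}
    (hinf : ∀ i, (B i).Infinite) (hfin : ∀ i j, i ≠ j → (B i ∩ B j).Finite) :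
    Function.Injective B := by
  intro i j hij
  by_contra hne
  have := hfin i j hne
  rw [hij, Set.inter_self] at this
  exact hinf j this

namespace TranslateFamily

def entries (L : Finset (List ℕ)) : Finset ℕ := L.biUnion List.toFinset

noncomputable def minEntry (L : Finset (List ℕ)) : ℕ := sInf (entries L : Set ℕ)

lemma entries_listTrans (a : ℕ) (L : Finset (List ℕ)) :
    entries (listTrans a L) = (entries L).image (· + a) := by
  ext x
  simp only [entries, listTrans, Finset.mem_biUnion, Finset.mem_image, List.mem_toFinset]
  constructor
  · rintro ⟨_, ⟨l, hl, rfl⟩, hx⟩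
    obtain ⟨y, hy, rfl⟩ := List.mem_map.mp hx
    exact ⟨y, ⟨l, hl, hy⟩, rfl⟩
  · rintro ⟨y, ⟨l, hl, hy⟩, rfl⟩
    exact ⟨_, ⟨l, hl, rfl⟩, List.mem_map_of_mem hy⟩

lemma minEntry_listTrans (a : ℕ) {L : Finset (List ℕ)} (hL : (entries L).Nonempty) :
    minEntry (listTrans a L) = minEntry L + a := by
  rw [minEntry, entries_listTrans, Finset.coe_image, Nat.sInf_image_add (by exact_mod_cast hL)]
  rfl

def translateFamily (e : ℕ → Finset (List ℕ)) (S : Set ℕ) : Set (Finset (List ℕ)) :=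
  {L' | ∃ k t, t ∈ S ∧ k < t ∧ minEntry (e k) < t ∧ L' = listTrans (t - minEntry (e k)) (e k)}

section translateFamily

variable {e : ℕ → Finset (List ℕ)} {S S' : Set ℕ}

lemma minEntry_translate (he : ∀ k, (entries (e k)).Nonempty) {k t : ℕ}
    (ht : minEntry (e k) < t) : minEntry (listTrans (t - minEntry (e k)) (e k)) = t := by
  rw [minEntry_listTrans _ (he k)]
  omega

lemma minEntry_mem_of_mem_translateFamily (he : ∀ k, (entries (e k)).Nonempty)
    {L' : Finset (List ℕ)} (hL' : L' ∈ translateFamily e S) :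
    minEntry L' ∈ S ∧ ∃ k < minEntry L', L' = listTrans (minEntry L' - minEntry (e k)) (e k) := by
  obtain ⟨k, t, htS, hkt, hmt, rfl⟩ := hL'
  rw [minEntry_translate he hmt]
  exact ⟨htS, k, hkt, rfl⟩

lemma exists_listTrans_mem_translateFamily (hS : S.Infinite) (k : ℕ) :
    ∃ L' ∈ translateFamily e S, ∃ a : ℕ, 0 < a ∧ L' = listTrans a (e k) := by
  obtain ⟨t, htS, ht⟩ := hS.exists_gt (max k (minEntry (e k)))
  rw [max_lt_iff] at ht
  exact ⟨_, ⟨k, t, htS, ht.1, ht.2, rfl⟩, t - minEntry (e k), by omega, rfl⟩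

lemma translateFamily_infinite (he : ∀ k, (entries (e k)).Nonempty) (hS : S.Infinite) :
    (translateFamily e S).Infinite := by
  refine Set.Infinite.of_image minEntry ((hS.sdiff (Set.finite_Iic (minEntry (e 0)))).mono ?_)
  rintro t ⟨htS, ht⟩
  rw [Set.mem_Iic, not_le] at ht
  exact ⟨_, ⟨0, t, htS, by omega, ht, rfl⟩, minEntry_translate he ht⟩

lemma translateFamily_inter_finite (he : ∀ k, (entries (e k)).Nonempty) (h : (S ∩ S').Finite) :
    (translateFamily e S ∩ translateFamily e S').Finite := by
  refine (h.biUnion fun t _ =>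
    (Set.finite_Iio t).image fun k => listTrans (t - minEntry (e k)) (e k)).subset ?_
  rintro L' ⟨hL, hL'⟩
  obtain ⟨htS, k, hk, hL'k⟩ := minEntry_mem_of_mem_translateFamily he hL
  exact Set.mem_biUnion ⟨htS, (minEntry_mem_of_mem_translateFamily he hL').1⟩ ⟨k, hk, hL'k.symm⟩

lemma disjoint_translateFamily (he : ∀ k, (entries (e k)).Nonempty) (h : Disjoint S S') :
    Disjoint (translateFamily e S) (translateFamily e S') :=
  Set.disjoint_left.mpr fun _ hL hL' => Set.disjoint_left.mp h
    (minEntry_mem_of_mem_translateFamily he hL).1 (minEntry_mem_of_mem_translateFamily he hL').1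

end translateFamily

section IsUElem

variable {r : ℕ → ℕ} {L : Finset (List ℕ)}

lemma entries_nonempty_of_isUElem (hr : ∀ n, 0 < n → 0 < r n) (hL : IsUElem r L) :
    (entries L).Nonempty := by
  obtain ⟨n, hn, hcard, hall⟩ := hL
  obtain ⟨l, hl⟩ := Finset.card_pos.mp (hcard ▸ hn)
  have hne : l ≠ [] := List.ne_nil_of_length_pos ((hall l hl).1 ▸ hr n hn)
  exact ⟨l.head hne, Finset.mem_biUnion.mpr ⟨l, hl, List.mem_toFinset.mpr (List.head_mem hne)⟩⟩

lemma isUElem_listTrans (a : ℕ) (hL : IsUElem r L) : IsUElem r (listTrans a L) := by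
  obtain ⟨n, hn, hcard, hall⟩ := hL
  refine ⟨n, hn, ?_, ?_⟩
  · rw [listTrans, Finset.card_image_of_injective _
      (List.map_injective_iff.mpr (add_left_injective a)), hcard]
  · simp only [listTrans, Finset.mem_image]
    rintro _ ⟨l, hl, rfl⟩
    refine ⟨by simpa using (hall l hl).1, ?_⟩
    simp only [List.mem_map]
    rintro _ ⟨x, hx, rfl⟩
    exact Nat.add_pos_left ((hall l hl).2 x hx) a

lemma translateFamily_subset_isUElem {e : ℕ → Finset (List ℕ)} (he : ∀ k, IsUElem r (e k))
    (S : Set ℕ) : translateFamily e S ⊆ {L | IsUElem r L} := by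
  rintro _ ⟨k, t, -, -, -, rfl⟩
  exact isUElem_listTrans _ (he k)

lemma exists_range_eq_setOf_isUElem (r : ℕ → ℕ) :
    ∃ e : ℕ → Finset (List ℕ), Set.range e = {L | IsUElem r L} := by
  have h : IsUElem r {List.replicate (r 1) 1} := by
    refine ⟨1, one_pos, rfl, ?_⟩
    simp only [Finset.mem_singleton, forall_eq, List.length_replicate, true_and]
    intro x hx
    rw [List.eq_of_mem_replicate hx]
    exact one_pos
  obtain ⟨e, he⟩ := (Set.to_countable {L | IsUElem r L}).exists_eq_range ⟨_, h⟩
  exact ⟨e, he.symm⟩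

end IsUElem

open Classical in
noncomputable def initialSegmentCode (α : Set ℕ) (n : ℕ) : ℕ :=
  Nat.pair n (Encodable.encode ((Finset.range n).filter (· ∈ α)))

lemma disjoint_range_pair {k m : ℕ} (h : k ≠ m) :
    Disjoint (Set.range (Nat.pair k)) (Set.range (Nat.pair m)) :=
  Set.disjoint_left.mpr fun _ ⟨_, hx⟩ ⟨_, hy⟩ => h (Nat.pair_eq_pair.mp (hx.trans hy.symm)).1

lemma range_pair_infinite (k : ℕ) : (Set.range (Nat.pair k)).Infinite :=
  Set.infinite_range_of_injective fun _ _ h => (Nat.pair_eq_pair.mp h).2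

lemma initialSegmentCode_injective (α : Set ℕ) : Function.Injective (initialSegmentCode α) :=
  fun _ _ h => (Nat.pair_eq_pair.mp h).1

lemma range_initialSegmentCode_inter_finite {α β : Set ℕ} (h : α ≠ β) :
    (Set.range (initialSegmentCode α) ∩ Set.range (initialSegmentCode β)).Finite := by
  obtain ⟨i, hi⟩ : ∃ i, ¬(i ∈ α ↔ i ∈ β) := by
    by_contra! hc
    exact h (Set.ext hc)
  refine ((Set.finite_Iic i).image (initialSegmentCode α)).subset ?_
  rintro _ ⟨⟨n, rfl⟩, ⟨m, hm⟩⟩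
  obtain ⟨rfl, hcode⟩ := Nat.pair_eq_pair.mp hm
  refine ⟨m, Set.mem_Iic.mpr ?_, rfl⟩
  by_contra! him
  have := Finset.ext_iff.mp (Encodable.encode_injective hcode) i
  simp only [Finset.mem_filter, Finset.mem_range, him, true_and] at this
  exact hi this.symm

end TranslateFamily

open TranslateFamily in
/-- Let `⟨r_n⟩_{n=1}^∞` be a sequence of positive integers and let
`𝒰 = ⋃_{n=1}^∞ P_n(^{r_n}ℕ)`. (i) There is an almost disjoint family, indexed by `Set ℕ`
(a type of cardinality `2^ℵ₀`), of infinite subsets of `𝒰` each of which contains a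
translate of every member of `𝒰`; (ii) there is a countably infinite pairwise disjoint
family of infinite subsets of `𝒰` with the same property. -/
theorem stmt7 (r : ℕ → ℕ) (hr : ∀ n, 0 < n → 0 < r n) :
    (∃ B : Set ℕ → Set (Finset (List ℕ)),
      Function.Injective B ∧
      (∀ α, B α ⊆ {L | IsUElem r L} ∧ (B α).Infinite) ∧
      (∀ α β, α ≠ β → (B α ∩ B β).Finite) ∧
      (∀ α, ∀ L, IsUElem r L → ∃ L' ∈ B α, ∃ a : ℕ, 0 < a ∧ L' = listTrans a L)) ∧
    (∃ B : ℕ → Set (Finset (List ℕ)),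
      (∀ k, B k ⊆ {L | IsUElem r L} ∧ (B k).Infinite) ∧
      (∀ k m, k ≠ m → Disjoint (B k) (B m)) ∧
      (∀ k, ∀ L, IsUElem r L → ∃ L' ∈ B k, ∃ a : ℕ, 0 < a ∧ L' = listTrans a L)) := by
  obtain ⟨e, hrange⟩ := exists_range_eq_setOf_isUElem r
  have he : ∀ k, IsUElem r (e k) := fun k => (hrange ▸ Set.mem_range_self k :)
  have hne : ∀ k, (entries (e k)).Nonempty := fun k => entries_nonempty_of_isUElem hr (he k)
  have hcover : ∀ S : Set ℕ, S.Infinite → ∀ L, IsUElem r L →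
      ∃ L' ∈ translateFamily e S, ∃ a : ℕ, 0 < a ∧ L' = listTrans a L := by
    intro S hS L hL
    obtain ⟨k, rfl⟩ : L ∈ Set.range e := hrange ▸ hL
    exact exists_listTrans_mem_translateFamily hS k
  have hA : ∀ α, (Set.range (initialSegmentCode α)).Infinite := fun α =>
    Set.infinite_range_of_injective (initialSegmentCode_injective α)
  have hBinf : ∀ α, (translateFamily e (Set.range (initialSegmentCode α))).Infinite :=
    fun α => translateFamily_infinite hne (hA α)
  have hBfin : ∀ α β, α ≠ β → (translateFamily e (Set.range (initialSegmentCode α)) ∩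
      translateFamily e (Set.range (initialSegmentCode β))).Finite :=
    fun α β h => translateFamily_inter_finite hne (range_initialSegmentCode_inter_finite h)
  exact ⟨⟨_, injective_of_infinite_of_inter_finite hBinf hBfin,
      fun α => ⟨translateFamily_subset_isUElem he _, hBinf α⟩, hBfin,
      fun α => hcover _ (hA α)⟩,
    ⟨fun k => translateFamily e (Set.range (Nat.pair k)),
      fun k => ⟨translateFamily_subset_isUElem he _,
        translateFamily_infinite hne (range_pair_infinite k)⟩,
      fun k m hkm => disjoint_translateFamily hne (disjoint_range_pair hkm),
      fun k => hcover _ (range_pair_infinite k)⟩⟩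
end

section
/- Let A be a combinatorially rich set in (ℕ,+). Then there is a family ⟨A_α⟩_{α < 2^{ℵ₀}} of 2^{ℵ₀} subsets of A such that each A_α is an infinite combinatorially rich set in (ℕ,+) and A_α ∩ A_β is finite whenever α ≠ β. -/
/- Here the positive integers are encoded inside Lean's `ℕ` via positivity conditions. -/

/-- `A ⊆ ℕ⁺` is combinatorially rich: there is a sequence `⟨r_n⟩_{n=1}^∞` of positive
integers such that for every positive `n` and every set `L` of `n` functions
`{1,…,r_n} → ℕ⁺` there are a positive `a` and a nonempty `H ⊆ {1,…,r_n}` with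
`S_L(a,H) = {a + ∑_{t ∈ H} f(t) : f ∈ L} ⊆ A`. -/
def CombRich (A : Set ℕ) : Prop :=
  ∃ r : ℕ → ℕ, (∀ n, 0 < n → 0 < r n) ∧
    ∀ n : ℕ, 0 < n → ∀ L : Finset (Fin (r n) → ℕ), L.card = n →
      (∀ f ∈ L, ∀ t, 0 < f t) →
      ∃ a : ℕ, 0 < a ∧ ∃ H : Finset (Fin (r n)), H.Nonempty ∧
        ∀ f ∈ L, a + ∑ t ∈ H, f t ∈ A


namespace Stmt8Aux

open Classical

/-- The (countable) type of all "richness requests" for the sequence `r`. -/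
def PairT (r : ℕ → ℕ) : Type :=
  {q : Σ n : ℕ, Finset (Fin (r n) → ℕ) // 0 < q.1 ∧ q.2.card = q.1 ∧ ∀ f ∈ q.2, ∀ t, 0 < f t}

instance (r : ℕ → ℕ) : Countable (PairT r) := by
  unfold PairT; infer_instance

instance (r : ℕ → ℕ) : Nonempty (PairT r) :=
  ⟨⟨⟨1, {fun _ => 1}⟩, by simp, by simp, by simp⟩⟩

/-- Witnesses with arbitrarily large base point. -/
theorem key {A : Set ℕ} {r : ℕ → ℕ}
    (hwit : ∀ n : ℕ, 0 < n → ∀ L : Finset (Fin (r n) → ℕ), L.card = n →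
      (∀ f ∈ L, ∀ t, 0 < f t) →
      ∃ a : ℕ, 0 < a ∧ ∃ H : Finset (Fin (r n)), H.Nonempty ∧
        ∀ f ∈ L, a + ∑ t ∈ H, f t ∈ A)
    (p : PairT r) (M : ℕ) :
    ∃ (a : ℕ) (H : Finset (Fin (r p.1.1))), M < a ∧ H.Nonempty ∧
      ∀ f ∈ p.1.2, a + ∑ t ∈ H, f t ∈ A := by
  obtain ⟨⟨n, L⟩, hn, hL, hpos⟩ := p
  dsimp at *
  set L' := L.image (fun f => fun t => f t + M) with hL'
  have hinj : Set.InjOn (fun f : Fin (r n) → ℕ => fun t => f t + M) L := by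
    intro f _ g _ h
    funext t
    have := congrFun h t
    simpa using this
  have hcard : L'.card = n := by
    rw [hL', Finset.card_image_of_injOn hinj, hL]
  have hpos' : ∀ f ∈ L', ∀ t, 0 < f t := by
    intro f hf t
    rw [hL', Finset.mem_image] at hf
    obtain ⟨g, hg, rfl⟩ := hf
    exact lt_of_lt_of_le (hpos g hg t) (Nat.le_add_right _ _)
  obtain ⟨a, ha, H, hH, hmem⟩ := hwit n hn L' hcard hpos'
  refine ⟨a + H.card * M, H, ?_, hH, ?_⟩
  · have hc : 1 ≤ H.card := hH.card_pos
    have : 1 * M ≤ H.card * M := Nat.mul_le_mul_right _ hc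
    omega
  · intro f hf
    have h1 : a + ∑ t ∈ H, (f t + M) ∈ A :=
      hmem _ (Finset.mem_image_of_mem _ hf)
    have h2 : ∑ t ∈ H, (f t + M) = ∑ t ∈ H, f t + H.card * M := by
      rw [Finset.sum_add_distrib, Finset.sum_const, smul_eq_mul]
    rw [h2] at h1
    convert h1 using 1
    ring

variable {r : ℕ → ℕ}

/-- The witness set for request `p` with all elements above `M`. -/
noncomputable def Wfin (aC : PairT r → ℕ → ℕ)
    (HC : (p : PairT r) → ℕ → Finset (Fin (r p.1.1))) (p : PairT r) (M : ℕ) : Finset ℕ :=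
  p.1.2.image (fun f => aC p M + ∑ t ∈ HC p M, f t)

noncomputable def Wof (g : ℕ → PairT r) (aC : PairT r → ℕ → ℕ)
    (HC : (p : PairT r) → ℕ → Finset (Fin (r p.1.1))) (j M : ℕ) : Finset ℕ :=
  (Finset.range (j + 1)).biUnion (fun i => Wfin aC HC (g i) M)

noncomputable def bnd (g : ℕ → PairT r) (aC : PairT r → ℕ → ℕ)
    (HC : (p : PairT r) → ℕ → Finset (Fin (r p.1.1))) : ℕ → ℕ
  | 0 => 0
  | j + 1 => (Wof g aC HC j (bnd g aC HC j)).sup id + 1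

noncomputable def Wj (g : ℕ → PairT r) (aC : PairT r → ℕ → ℕ)
    (HC : (p : PairT r) → ℕ → Finset (Fin (r p.1.1))) (j : ℕ) : Finset ℕ :=
  Wof g aC HC j (bnd g aC HC j)

theorem bnd_succ (g : ℕ → PairT r) (aC : PairT r → ℕ → ℕ)
    (HC : (p : PairT r) → ℕ → Finset (Fin (r p.1.1))) (j : ℕ) :
    bnd g aC HC (j + 1) = (Wof g aC HC j (bnd g aC HC j)).sup id + 1 := rfl

/-- Initial-segment encoding giving an almost disjoint family of infinite subsets of ℕ. -/
noncomputable def seg (α : Set ℕ) (n : ℕ) : Finset ℕ :=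
  (Finset.range n).filter (fun m => m ∈ α)

noncomputable def Dt (α : Set ℕ) : Set ℕ :=
  Set.range (fun n => Nat.pair n (Encodable.encode (seg α n)))

theorem Dt_infinite (α : Set ℕ) : (Dt α).Infinite := by
  apply Set.infinite_range_of_injective
  intro n m h
  exact (Nat.pair_eq_pair.mp h).1

theorem Dt_unbounded (α : Set ℕ) (i : ℕ) : ∃ j ∈ Dt α, i ≤ j := by
  refine ⟨Nat.pair i (Encodable.encode (seg α i)), ⟨i, rfl⟩, Nat.left_le_pair _ _⟩

theorem Dt_almost_disjoint {α β : Set ℕ} (h : α ≠ β) : (Dt α ∩ Dt β).Finite := by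
  have : ∃ m, (m ∈ α) ≠ (m ∈ β) := by
    by_contra hc
    push_neg at hc
    exact h (Set.ext fun m => by
      have := hc m
      constructor
      · intro hm; rw [← this]; exact hm
      · intro hm; rw [this]; exact hm)
  obtain ⟨m, hm⟩ := this
  have hsub : Dt α ∩ Dt β ⊆
      (fun n => Nat.pair n (Encodable.encode (seg α n))) '' (Set.Iic m) := by
    rintro x ⟨⟨n, rfl⟩, ⟨n', hn'⟩⟩
    have hp := Nat.pair_eq_pair.mp hn'.symm
    obtain ⟨rfl, henc⟩ := hp
    have hseg : seg α n = seg β n := (Encodable.encode_injective henc.symm).symm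
    by_contra hnot
    simp only [Set.mem_image, Set.mem_Iic] at hnot
    have hn : m < n := by
      by_contra hh
      exact hnot ⟨n, by omega, rfl⟩
    apply hm
    have h1 : (m ∈ α) = (m ∈ seg α n) := by
      simp [seg, Finset.mem_filter, Finset.mem_range, hn]
    have h2 : (m ∈ β) = (m ∈ seg β n) := by
      simp [seg, Finset.mem_filter, Finset.mem_range, hn]
    rw [h1, h2, hseg]
  exact Set.Finite.subset ((Set.finite_Iic m).image _) hsub

end Stmt8Aux


/-- If `A` is a combinatorially rich set in `(ℕ,+)` (`ℕ` the positive
integers), then `A` contains a family of `2^ℵ₀` (indexed by `Set ℕ`) almost disjoint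
infinite combinatorially rich subsets. -/
theorem stmt8 (A : Set ℕ) (hA : ∀ n ∈ A, 0 < n) (hCR : CombRich A) :
    ∃ B : Set ℕ → Set ℕ,
      Function.Injective B ∧
      (∀ α, B α ⊆ A ∧ (B α).Infinite ∧ CombRich (B α)) ∧
      (∀ α β, α ≠ β → (B α ∩ B β).Finite) := by

  classical
  obtain ⟨r, hrpos, hwit⟩ := hCR
  have key2 := Stmt8Aux.key (A := A) (r := r) hwit
  choose aC HC haC hHC hmC using key2
  obtain ⟨g, hg⟩ := exists_surjective_nat (Stmt8Aux.PairT r)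
  set W : ℕ → Finset ℕ := Stmt8Aux.Wj g aC HC with hW
  set bnd : ℕ → ℕ := Stmt8Aux.bnd g aC HC with hbnd
  have hWfin_mem : ∀ (p : Stmt8Aux.PairT r) (M : ℕ) (f : Fin (r p.1.1) → ℕ), f ∈ p.1.2 →
      aC p M + ∑ t ∈ HC p M, f t ∈ Stmt8Aux.Wfin aC HC p M :=
    fun p M f hf => Finset.mem_image_of_mem _ hf
  have hWfin_sub : ∀ (p : Stmt8Aux.PairT r) (M x : ℕ),
      x ∈ Stmt8Aux.Wfin aC HC p M → x ∈ A ∧ M < x := by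
    intro p M x hx
    rw [Stmt8Aux.Wfin, Finset.mem_image] at hx
    obtain ⟨f, hf, rfl⟩ := hx
    exact ⟨hmC p M f hf, lt_of_lt_of_le (haC p M) (Nat.le_add_right _ _)⟩
  have hWfin_ne : ∀ (p : Stmt8Aux.PairT r) (M : ℕ), (Stmt8Aux.Wfin aC HC p M).Nonempty := by
    intro p M
    obtain ⟨f, hf⟩ := Finset.card_pos.mp (by rw [p.2.2.1]; exact p.2.1)
    exact ⟨_, hWfin_mem p M f hf⟩
  have hWj : ∀ j x, x ∈ W j → x ∈ A ∧ bnd j < x ∧ x < bnd (j + 1) := by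
    intro j x hx
    rw [hW, Stmt8Aux.Wj, Stmt8Aux.Wof, Finset.mem_biUnion] at hx
    obtain ⟨i, hi, hx⟩ := hx
    obtain ⟨hxA, hxM⟩ := hWfin_sub _ _ _ hx
    refine ⟨hxA, hxM, ?_⟩
    have hle : x ≤ (Stmt8Aux.Wof g aC HC j (Stmt8Aux.bnd g aC HC j)).sup id :=
      Finset.le_sup (f := id)
        (by rw [Stmt8Aux.Wof, Finset.mem_biUnion]; exact ⟨i, hi, hx⟩)
    rw [hbnd, Stmt8Aux.bnd_succ]
    omega
  have hWne : ∀ j, (W j).Nonempty := by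
    intro j
    obtain ⟨x, hx⟩ := hWfin_ne (g 0) (bnd j)
    exact ⟨x, by
      rw [hW, Stmt8Aux.Wj, Stmt8Aux.Wof, Finset.mem_biUnion]
      exact ⟨0, by simp, hx⟩⟩
  have hbmono : StrictMono bnd := by
    apply strictMono_nat_of_lt_succ
    intro j
    obtain ⟨x, hx⟩ := hWne j
    have := hWj j x hx
    omega
  have hdisj : ∀ j k x, x ∈ W j → x ∈ W k → j = k := by
    intro j k x hj hk
    by_contra hne
    rcases Nat.lt_or_ge j k with h | h
    · have h1 := hWj j x hj
      have h2 := hWj k x hk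
      have : bnd (j + 1) ≤ bnd k := hbmono.monotone (by omega)
      omega
    · have h1 := hWj j x hj
      have h2 := hWj k x hk
      have : bnd (k + 1) ≤ bnd j := hbmono.monotone (by omega)
      omega
  set Bf : Set ℕ → Set ℕ := fun α => {x | ∃ j ∈ Stmt8Aux.Dt α, x ∈ W j} with hBf
  have hInf : ∀ α, (Bf α).Infinite := by
    intro α
    have hmin : ∀ j, (W j).min' (hWne j) ∈ W j := fun j => Finset.min'_mem _ _
    have hinj : Function.Injective (fun j => (W j).min' (hWne j)) := by
      intro j k h
      exact hdisj j k _ (hmin j) (by rw [show (W j).min' (hWne j) = (W k).min' (hWne k) from h]; exact hmin k)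
    have himg : ((fun j => (W j).min' (hWne j)) '' (Stmt8Aux.Dt α)).Infinite :=
      (Stmt8Aux.Dt_infinite α).image hinj.injOn
    apply himg.mono
    rintro x ⟨j, hj, rfl⟩
    exact ⟨j, hj, hmin j⟩
  have hFin : ∀ α β, α ≠ β → (Bf α ∩ Bf β).Finite := by
    intro α β hne
    have hsub : Bf α ∩ Bf β ⊆ ⋃ j ∈ (Stmt8Aux.Dt α ∩ Stmt8Aux.Dt β), (W j : Set ℕ) := by
      rintro x ⟨⟨j, hj, hxj⟩, ⟨k, hk, hxk⟩⟩
      have hjk := hdisj j k x hxj hxk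
      subst hjk
      exact Set.mem_biUnion ⟨hj, hk⟩ hxj
    exact Set.Finite.subset
      ((Stmt8Aux.Dt_almost_disjoint hne).biUnion (fun j _ => (W j).finite_toSet)) hsub
  refine ⟨Bf, ?_, ?_, hFin⟩
  · intro α β h
    by_contra hne
    have hf := hFin α β hne
    rw [h, Set.inter_self] at hf
    exact hInf β hf
  · intro α
    refine ⟨?_, hInf α, ?_⟩
    · rintro x ⟨j, hj, hx⟩
      exact (hWj j x hx).1
    · refine ⟨r, hrpos, ?_⟩
      intro n hn L hL hpos
      set p : Stmt8Aux.PairT r := ⟨⟨n, L⟩, hn, hL, hpos⟩ with hp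
      obtain ⟨i, hi⟩ := hg p
      obtain ⟨j, hj, hij⟩ := Stmt8Aux.Dt_unbounded α i
      refine ⟨aC p (bnd j), ?_, HC p (bnd j), hHC p (bnd j), ?_⟩
      · have := haC p (bnd j)
        omega
      · intro f hf
        refine ⟨j, hj, ?_⟩
        rw [hW, Stmt8Aux.Wj, Stmt8Aux.Wof, Finset.mem_biUnion]
        refine ⟨i, Finset.mem_range.mpr (by omega), ?_⟩
        rw [hi]
        exact hWfin_mem p (bnd j) f hf
end

section
/- Let A be a combinatorially rich set in (ℕ,+). Then A can be partitioned into countably infinitely many pairwise disjoint sets, each of which is a combinatorially rich set in (ℕ,+). -/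
/-- If `A` is a combinatorially rich set in `(ℕ,+)` (`ℕ` the positive
integers), then `A` can be partitioned into countably infinitely many pairwise disjoint
combinatorially rich sets. -/
theorem stmt9 (A : Set ℕ) (hA : ∀ n ∈ A, 0 < n) (hCR : CombRich A) :
    ∃ B : ℕ → Set ℕ, (⋃ n, B n) = A ∧
      (∀ m n : ℕ, m ≠ n → Disjoint (B m) (B n)) ∧
      ∀ n, CombRich (B n) := by
  classical
  obtain ⟨r, hr, hmain⟩ := hCR
  -- Key avoidance lemma: witnesses can be found above any bound M.
  have key : ∀ (M n : ℕ), 0 < n → ∀ L : Finset (Fin (r n) → ℕ), L.card = n →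
      (∀ f ∈ L, ∀ t, 0 < f t) →
      ∃ a : ℕ, M < a ∧ ∃ H : Finset (Fin (r n)), H.Nonempty ∧
        ∀ f ∈ L, a + ∑ t ∈ H, f t ∈ A := by
    intro M n hn L hcard hpos
    set c := M + 1 with hc
    have hinj : Function.Injective (fun f : Fin (r n) → ℕ => fun t => f t + c) := by
      intro f g hfg
      funext t
      have := congrFun hfg t
      simpa using this
    set L' : Finset (Fin (r n) → ℕ) := L.image (fun f => fun t => f t + c) with hL'
    have hcard' : L'.card = n := by
      rw [hL', Finset.card_image_of_injective _ hinj, hcard]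
    have hpos' : ∀ f ∈ L', ∀ t, 0 < f t := by
      intro f hf t
      rw [hL', Finset.mem_image] at hf
      obtain ⟨g, hg, rfl⟩ := hf
      show 0 < g t + c
      omega
    obtain ⟨a, ha, H, hH, hmem⟩ := hmain n hn L' hcard' hpos'
    have hcardH : 1 ≤ H.card := Finset.card_pos.mpr hH
    refine ⟨a + H.card * c, ?_, H, hH, ?_⟩
    · have : c ≤ H.card * c := Nat.le_mul_of_pos_left c (Finset.card_pos.mpr hH)
      omega
    · intro f hf
      have hf' : (fun t => f t + c) ∈ L' := by
        rw [hL']; exact Finset.mem_image_of_mem _ hf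
      have h1 := hmem _ hf'
      have hsum : ∑ t ∈ H, (f t + c) = ∑ t ∈ H, f t + H.card * c := by
        rw [Finset.sum_add_distrib, Finset.sum_const, smul_eq_mul]
      rw [hsum] at h1
      have : a + H.card * c + ∑ t ∈ H, f t = a + (∑ t ∈ H, f t + H.card * c) := by ring
      rw [this]
      exact h1
  -- For each bound M and each "instruction" t, choose a witness set.
  have stepEx : ∀ (M : ℕ) (t : ℕ × Σ n : ℕ, Finset (Fin (r n) → ℕ)),
      ∃ S : Finset ℕ, (∀ x ∈ S, x ∈ A ∧ M < x) ∧
        (0 < t.2.1 → t.2.2.card = t.2.1 → (∀ f ∈ t.2.2, ∀ s, 0 < f s) →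
          ∃ a : ℕ, 0 < a ∧ ∃ H : Finset (Fin (r t.2.1)), H.Nonempty ∧
            ∀ f ∈ t.2.2, a + ∑ s ∈ H, f s ∈ S) := by
    intro M t
    obtain ⟨k, n, L⟩ := t
    by_cases hv : 0 < n ∧ L.card = n ∧ ∀ f ∈ L, ∀ s, 0 < f s
    · obtain ⟨hn, hcard, hpos⟩ := hv
      obtain ⟨a, ha, H, hH, hmem⟩ := key M n hn L hcard hpos
      refine ⟨L.image (fun f => a + ∑ s ∈ H, f s), ?_, ?_⟩
      · intro x hx
        rw [Finset.mem_image] at hx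
        obtain ⟨f, hf, rfl⟩ := hx
        exact ⟨hmem f hf, lt_of_lt_of_le ha (Nat.le_add_right _ _)⟩
      · intro _ _ _
        exact ⟨a, by omega, H, hH, fun f hf => Finset.mem_image_of_mem _ hf⟩
    · refine ⟨∅, by simp, ?_⟩
      intro h1 h2 h3
      exact absurd ⟨h1, h2, h3⟩ hv
  choose Sfun hS1 hS2 using stepEx
  -- An enumeration of all instructions.
  haveI : Nonempty (ℕ × Σ n : ℕ, Finset (Fin (r n) → ℕ)) := ⟨(0, ⟨0, ∅⟩)⟩
  obtain ⟨e, he⟩ := exists_surjective_nat (ℕ × Σ n : ℕ, Finset (Fin (r n) → ℕ))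
  -- The recursive construction: F i = (witness set at stage i, running max).
  obtain ⟨F, hF0, hFS⟩ : ∃ F : ℕ → Finset ℕ × ℕ,
      F 0 = (Sfun 0 (e 0), max 0 ((Sfun 0 (e 0)).sup id)) ∧
      ∀ i, F (i+1) = (Sfun (F i).2 (e (i+1)),
        max (F i).2 ((Sfun (F i).2 (e (i+1))).sup id)) :=
    ⟨fun i => Nat.rec (Sfun 0 (e 0), max 0 ((Sfun 0 (e 0)).sup id))
        (fun i p => (Sfun p.2 (e (i+1)), max p.2 ((Sfun p.2 (e (i+1))).sup id))) i,
      rfl, fun i => rfl⟩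
  have hgety : ∀ i, ∃ M, F i = (Sfun M (e i), max M ((Sfun M (e i)).sup id)) := by
    intro i
    cases i with
    | zero => exact ⟨0, hF0⟩
    | succ j => exact ⟨(F j).2, hFS j⟩
  have hA' : ∀ i, ∀ x ∈ (F i).1, x ∈ A := by
    intro i x hx
    obtain ⟨M, hM⟩ := hgety i
    rw [hM] at hx
    exact (hS1 M (e i) x hx).1
  have hub : ∀ i, ∀ x ∈ (F i).1, x ≤ (F i).2 := by
    intro i x hx
    obtain ⟨M, hM⟩ := hgety i
    rw [hM] at hx ⊢
    exact le_max_of_le_right (Finset.le_sup (f := id) hx)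
  have hlow : ∀ i, ∀ x ∈ (F (i+1)).1, (F i).2 < x := by
    intro i x hx
    rw [hFS i] at hx
    exact (hS1 (F i).2 (e (i+1)) x hx).2
  have hmono : ∀ i j, i ≤ j → (F i).2 ≤ (F j).2 := by
    intro i j hij
    induction j with
    | zero =>
      obtain rfl : i = 0 := Nat.le_zero.mp hij
      exact le_refl _
    | succ j ih =>
      by_cases h : i ≤ j
      · exact le_trans (ih h) (by rw [hFS j]; exact le_max_left _ _)
      · obtain rfl : i = j + 1 := by omega
        exact le_refl _
  have hdisj : ∀ i j, i < j → ∀ x, x ∈ (F i).1 → x ∈ (F j).1 → False := by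
    intro i j hij x hxi hxj
    obtain ⟨j', rfl⟩ : ∃ j', j = j' + 1 := ⟨j - 1, by omega⟩
    have h1 := hub i x hxi
    have h2 := hlow j' x hxj
    have h3 := hmono i j' (by omega)
    omega
  have hdisj' : ∀ i j, i ≠ j → ∀ x, x ∈ (F i).1 → x ∈ (F j).1 → False := by
    intro i j hij x hxi hxj
    rcases lt_or_gt_of_ne hij with h | h
    · exact hdisj i j h x hxi hxj
    · exact hdisj j i h x hxj hxi
  -- The partition.
  set BB : ℕ → Set ℕ := fun k => if k = 0 then {x | x ∈ A ∧ ∀ i, (e i).1 ≠ 0 → x ∉ (F i).1}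
      else {x | ∃ i, (e i).1 = k ∧ x ∈ (F i).1} with hBB
  have hmem0 : ∀ x : ℕ, x ∈ BB 0 ↔ (x ∈ A ∧ ∀ i, (e i).1 ≠ 0 → x ∉ (F i).1) := by
    intro x
    simp [hBB]
  have hmemk : ∀ k : ℕ, k ≠ 0 → ∀ x : ℕ, (x ∈ BB k ↔ ∃ i, (e i).1 = k ∧ x ∈ (F i).1) := by
    intro k hk x
    simp [hBB, hk]
  refine ⟨BB, ?_, ?_, ?_⟩
  · ext x
    simp only [Set.mem_iUnion]
    constructor
    · rintro ⟨k, hk⟩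
      by_cases h : k = 0
      · rw [h, hmem0 x] at hk
        exact hk.1
      · rw [hmemk k h x] at hk
        obtain ⟨i, _, hx⟩ := hk
        exact hA' i x hx
    · intro hx
      by_cases hx2 : ∃ i, (e i).1 ≠ 0 ∧ x ∈ (F i).1
      · obtain ⟨i, hne, hxi⟩ := hx2
        exact ⟨(e i).1, (hmemk _ hne x).mpr ⟨i, rfl, hxi⟩⟩
      · push_neg at hx2
        exact ⟨0, (hmem0 x).mpr ⟨hx, hx2⟩⟩
  · intro m n hmn
    rw [Set.disjoint_left]
    intro x hxm hxn
    by_cases hm : m = 0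
    · have hn : n ≠ 0 := by omega
      rw [hm, hmem0 x] at hxm
      rw [hmemk n hn x] at hxn
      obtain ⟨i, hi, hxi⟩ := hxn
      exact hxm.2 i (by rw [hi]; exact hn) hxi
    · by_cases hn : n = 0
      · rw [hmemk m hm x] at hxm
        rw [hn, hmem0 x] at hxn
        obtain ⟨i, hi, hxi⟩ := hxm
        exact hxn.2 i (by rw [hi]; exact hm) hxi
      · rw [hmemk m hm x] at hxm
        rw [hmemk n hn x] at hxn
        obtain ⟨i, hi, hxi⟩ := hxm
        obtain ⟨j, hj, hxj⟩ := hxn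
        have hij : i ≠ j := by
          intro hij
          rw [hij, hj] at hi
          exact hmn hi.symm
        exact hdisj' i j hij x hxi hxj
  · intro k
    refine ⟨r, hr, ?_⟩
    intro n hn L hcard hpos
    obtain ⟨i, hi⟩ := he (k, ⟨n, L⟩)
    obtain ⟨M, hM⟩ := hgety i
    have hFi1 : (F i).1 = Sfun M (k, ⟨n, L⟩) := by rw [hM, hi]
    obtain ⟨a, ha, H, hH, hmem⟩ := hS2 M (k, ⟨n, L⟩) hn hcard hpos
    refine ⟨a, ha, H, hH, ?_⟩
    intro f hf
    have hx : a + ∑ s ∈ H, f s ∈ (F i).1 := by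
      rw [hFi1]; exact hmem f hf
    have hei : (e i).1 = k := by rw [hi]
    by_cases hk : k = 0
    · rw [hk, hmem0]
      refine ⟨hA' i _ hx, ?_⟩
      intro j hj hxj
      have hij : j ≠ i := by
        intro hji
        rw [hji, hei, hk] at hj
        exact hj rfl
      exact hdisj' j i hij _ hxj hx
    · rw [hmemk k hk]
      exact ⟨i, by rw [hi], hx⟩
end

section
/- Let A be a C_p-set in S and let R be a nonempty finite subset of ℙ. Then there exist functions α : P_f(ℕ→S) → S and H : P_f(ℕ→S) → P_f(ℕ) (where P_f(X) denotes the collection of nonempty finite subsets of X) such that: (1) if L₁, L₂ ∈ P_f(ℕ→S) and L₁ ⊊ L₂, then max H(L₁) < min H(L₂); and (2) whenever m ∈ ℕ, L₁ ⊊ L₂ ⊊ … ⊊ L_m in P_f(ℕ→S), and g_i ∈ L_i for each i ∈ {1,…,m}, then for every f ∈ R one has ∑_{i=1}^m α(L_i) + f(∑_{i=1}^m ∑_{t∈H(L_i)} g_i(t)) ∈ A. -/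
/-- `A` is a `J_p`-set in `S ⊆ D`: for every nonempty finite set `R` of integral polynomials
on `D` (one-variable polynomials with zero constant term) and every nonempty finite set `L`
of functions `g : ℕ → S`, there are `a ∈ S` and a nonempty finite `H ⊆ ℕ` with
`a + f(∑_{t ∈ H} g(t)) ∈ A` for every `f ∈ R` and `g ∈ L`. -/
def JpSet {D : Type*} [CommRing D] (S A : Set D) : Prop :=
  ∀ R : Finset (Polynomial D), R.Nonempty → (∀ f ∈ R, f.coeff 0 = 0) →
    ∀ L : Finset (ℕ → D), L.Nonempty → (∀ g ∈ L, ∀ n, g n ∈ S) →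
      ∃ a ∈ S, ∃ H : Finset ℕ, H.Nonempty ∧
        ∀ f ∈ R, ∀ g ∈ L, a + Polynomial.eval (∑ t ∈ H, g t) f ∈ A

/-- The semigroup operation on `S`, coming from closure of `S` under addition. -/
def sAdd {D : Type*} [Add D] {S : Set D} (hadd : ∀ a ∈ S, ∀ b ∈ S, a + b ∈ S)
    (x y : S) : S :=
  ⟨↑x + ↑y, hadd _ x.2 _ y.2⟩

/-- `A ∈ p + q` for ultrafilters `p, q` on `S`:
`{x ∈ S : {y ∈ S : x + y ∈ A} ∈ q} ∈ p`. -/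
def memSum {D : Type*} [Add D] {S : Set D} (hadd : ∀ a ∈ S, ∀ b ∈ S, a + b ∈ S)
    (p q : Ultrafilter S) (A : Set S) : Prop :=
  {x : S | {y : S | sAdd hadd x y ∈ A} ∈ q} ∈ p

/-- `p + p = p` for an ultrafilter `p` on `S`, stated memberwise. -/
def IsIdempotentUF {D : Type*} [Add D] {S : Set D}
    (hadd : ∀ a ∈ S, ∀ b ∈ S, a + b ∈ S) (p : Ultrafilter S) : Prop :=
  ∀ A : Set S, A ∈ p ↔ memSum hadd p p A

/-- `A` is a `C_p`-set in `S`: there is an idempotent ultrafilter `p` on `S`, all of whose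
members are `J_p`-sets, with `A ∈ p`. -/
def CpSet {D : Type*} [CommRing D] (S : Set D)
    (hadd : ∀ a ∈ S, ∀ b ∈ S, a + b ∈ S) (A : Set D) : Prop :=
  ∃ p : Ultrafilter S, IsIdempotentUF hadd p ∧
    (∀ B ∈ p, JpSet S (Subtype.val '' B)) ∧
    (Subtype.val ⁻¹' A : Set S) ∈ p

/-- `L` represents a member of `P_f(ℕ → S)`: a nonempty finite set of functions `ℕ → S`. -/
def ValidL {D : Type*} (S : Set D) (L : Finset (ℕ → D)) : Prop :=
  L.Nonempty ∧ ∀ g ∈ L, ∀ n, g n ∈ S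

/-!
Let `U` be the image of `p` among the ultrafilters on `D` and `B = A⋆ = {x ∈ A | -x + A ∈ U}`;
since `U + U = U`, both `B` and every `-x + B` with `x ∈ B` belong to `U`. The values `α L`, `H L`
are built by recursion on `L` along `⊊`, together with the finite set `sums L` of pairs
`(∑ α(Lᵢ), ∑ᵢ ∑_{t ∈ H(Lᵢ)} gᵢ t)` over all chains ending at `L`, keeping the invariant
`s + f w ∈ B` for `(s, w) ∈ sums L` and `f ∈ R`. To extend the chains through `L`, apply the
`J_p` property of `B ∩ ⋂ -(s + f w) + B` to the integral polynomials `x ↦ f (w + x) - f w` and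
to the tails `t ↦ g (t + k + 1)`, `k` bounding all earlier `H L'`: the resulting `a`, `H` give
`(s + a) + f (w + ∑_H g) = (s + f w) + (a + f (w + ∑_H g) - f w) ∈ B`.
-/

open Filter Finset Polynomial
open scoped Classical

attribute [local instance] Ultrafilter.add

section IdempotentUltrafilter

variable {M : Type*} [AddSemigroup M] {U : Ultrafilter M}

def starSet (U : Ultrafilter M) (A : Set M) : Set M :=
  {x | x ∈ A ∧ ∀ᶠ y in U, x + y ∈ A}

theorem starSet_mem (hU : U + U = U) {A : Set M} (hA : A ∈ U) : starSet U A ∈ U :=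
  inter_mem hA (by rwa [← hU] at hA)

theorem eventually_add_mem_starSet (hU : U + U = U) {A : Set M} {x : M}
    (hx : x ∈ starSet U A) : ∀ᶠ y in U, x + y ∈ starSet U A := by
  filter_upwards [starSet_mem hU hx.2] with y hy
  exact ⟨hy.1, by simpa only [Set.mem_ofPred_eq, add_assoc] using hy.2⟩

end IdempotentUltrafilter

theorem IsIdempotentUF.map_val_add_self {D : Type*} [Add D] {S : Set D}
    {hadd : ∀ a ∈ S, ∀ b ∈ S, a + b ∈ S} {p : Ultrafilter S} (hp : IsIdempotentUF hadd p) :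
    p.map (↑) + p.map (↑) = p.map ((↑) : S → D) :=
  Ultrafilter.eq_of_le fun _ hA => (hp _).1 hA

theorem JpSet.mono {D : Type*} [CommRing D] {S A B : Set D} (hA : JpSet S A) (hAB : A ⊆ B) :
    JpSet S B := fun R hR hR0 L hL hLS =>
  let ⟨a, ha, H, hH, hmem⟩ := hA R hR hR0 L hL hLS
  ⟨a, ha, H, hH, fun f hf g hg => hAB (hmem f hf g hg)⟩

section

variable {D : Type*} [CommRing D]

theorem JpSet.exists_shifted_mem {S A : Set D} (hA : JpSet S A) {R : Finset D[X]}
    (hR : R.Nonempty) {W : Finset D} (hW : W.Nonempty)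
    {L : Finset (ℕ → D)} (hL : ValidL S L) (k : ℕ) :
    ∃ a ∈ S, ∃ H : Finset ℕ, H.Nonempty ∧ (∀ t ∈ H, k < t) ∧
      ∀ w ∈ W, ∀ g ∈ L, ∀ f ∈ R, a + (eval (w + ∑ t ∈ H, g t) f - eval w f) ∈ A := by
  obtain ⟨a, ha, H, hH, hmem⟩ :=
    hA ((W ×ˢ R).image fun x => taylor x.1 x.2 - C (x.2.eval x.1)) ((hW.product hR).image _)
      (by
        simp only [mem_image]
        rintro _ ⟨x, -, rfl⟩
        rw [coeff_sub, taylor_coeff_zero, coeff_C_zero, sub_self])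
      (L.image fun g t => g (t + (k + 1))) (hL.1.image _)
      (by simpa using fun g hg n => hL.2 g hg _)
  refine ⟨a, ha, H.map (addRightEmbedding (k + 1)), hH.map, by simp; omega, fun w hw g hg f hf => ?_⟩
  have := hmem _ (mem_image.2 ⟨(w, f), mem_product.2 ⟨hw, hf⟩, rfl⟩) _ (mem_image_of_mem _ hg)
  simpa [sum_map, taylor_eval, add_comm] using this

section Construction

variable (S B : Set D) (R : Finset D[X])

-- The point `0` of `insert 0 T` stands for the chain consisting of `L` alone.
def IsStep (k : ℕ) (T : Finset (D × D)) (L : Finset (ℕ → D)) (a : D) (H : Finset ℕ) : Prop :=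
  a ∈ S ∧ H.Nonempty ∧ (∀ t ∈ H, k < t) ∧
    ∀ x ∈ insert 0 T, ∀ g ∈ L, ∀ f ∈ R, x.1 + a + eval (x.2 + ∑ t ∈ H, g t) f ∈ B

def AdmitsSteps : Prop :=
  ∀ k T L, (∀ x ∈ T, ∀ f ∈ R, x.1 + eval x.2 f ∈ B) → ValidL S L → ∃ a H, IsStep S B R k T L a H

variable {S B R}

theorem admitsSteps {U : Ultrafilter D} (hJ : ∀ A ∈ U, JpSet S A) (hB : B ∈ U)
    (hBshift : ∀ d ∈ B, ∀ᶠ y in U, d + y ∈ B) (hR : R.Nonempty) (hR0 : ∀ f ∈ R, f.coeff 0 = 0) :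
    AdmitsSteps S B R := by
  intro k T L hT hL
  set A := B ∩ ⋂ x ∈ T ×ˢ R, {y | x.1.1 + eval x.1.2 x.2 + y ∈ B}
  have hA : A ∈ U := inter_mem hB <| (biInter_finset_mem _).2 fun x hx =>
    hBshift _ (hT _ (mem_product.1 hx).1 _ (mem_product.1 hx).2)
  obtain ⟨a, ha, H, hH, hHk, hmem⟩ :=
    (hJ A hA).exists_shifted_mem hR (insert_nonempty 0 (T.image Prod.snd)) hL k
  refine ⟨a, H, ha, hH, hHk, fun x hx g hg f hf => ?_⟩
  rcases mem_insert.1 hx with rfl | hxT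
  · have := (hmem 0 (mem_insert_self _ _) g hg f hf).1
    simpa [← coeff_zero_eq_eval_zero, hR0 f hf] using this
  · have : x.1 + eval x.2 f + (a + (eval (x.2 + ∑ t ∈ H, g t) f - eval x.2 f)) ∈ B :=
      Set.mem_iInter₂.1 (hmem x.2 (mem_insert_of_mem (mem_image_of_mem _ hxT)) g hg f hf).2
      (x, f) (mem_product.2 ⟨hxT, hf⟩)
    convert this using 1
    ring

structure Stage (D : Type*) where
  a : D
  H : Finset ℕ
  sums : Finset (D × D)

noncomputable def extendSums (a : D) (H : Finset ℕ) (T : Finset (D × D)) (L : Finset (ℕ → D)) :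
    Finset (D × D) :=
  (insert 0 T ×ˢ L).image fun x => (x.1.1 + a, x.1.2 + ∑ t ∈ H, x.2 t)

theorem mem_extendSums {a : D} {H : Finset ℕ} {T : Finset (D × D)} {L : Finset (ℕ → D)}
    {x : D × D} (hx : x ∈ insert 0 T) {g : ℕ → D} (hg : g ∈ L) :
    (x.1 + a, x.2 + ∑ t ∈ H, g t) ∈ extendSums a H T L :=
  mem_image_of_mem _ (mem_product.2 (show (x, g).1 ∈ insert 0 T ∧ (x, g).2 ∈ L from ⟨hx, hg⟩))

theorem IsStep.forall_mem_extendSums {k : ℕ} {T : Finset (D × D)} {L : Finset (ℕ → D)} {a : D}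
    {H : Finset ℕ} (h : IsStep S B R k T L a H) :
    ∀ y ∈ extendSums a H T L, ∀ f ∈ R, y.1 + eval y.2 f ∈ B := by
  simp only [extendSums, mem_image, mem_product]
  rintro _ ⟨⟨x, g⟩, ⟨hx, hg⟩, rfl⟩ f hf
  exact h.2.2.2 x hx g hg f hf

variable (S B R) in
noncomputable def Stage.next (k : ℕ) (T : Finset (D × D)) (L : Finset (ℕ → D)) : Stage D :=
  let c := Classical.epsilon fun c : D × Finset ℕ => IsStep S B R k T L c.1 c.2
  ⟨c.1, c.2, extendSums c.1 c.2 T L⟩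

theorem isStep_next {k : ℕ} {T : Finset (D × D)} {L : Finset (ℕ → D)}
    (h : ∃ a H, IsStep S B R k T L a H) :
    IsStep S B R k T L (Stage.next S B R k T L).a (Stage.next S B R k T L).H :=
  let ⟨a, H, hstep⟩ := h
  Classical.epsilon_spec (p := fun c : D × Finset ℕ => IsStep S B R k T L c.1 c.2) ⟨(a, H), hstep⟩

variable (S B R) in
noncomputable def stage (L : Finset (ℕ → D)) : Stage D :=
  Stage.next S B R (L.ssubsets.attach.sup fun L' => (stage L'.1).H.sup id)
    ((L.ssubsets.filter Finset.Nonempty).attach.biUnion fun L' => (stage L'.1).sums) L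
termination_by L.card
decreasing_by
  · exact card_lt_card (mem_ssubsets.1 L'.2)
  · exact card_lt_card (mem_ssubsets.1 (mem_filter.1 L'.2).1)

variable (S B R) in
noncomputable def prevMax (L : Finset (ℕ → D)) : ℕ :=
  L.ssubsets.sup fun L' => (stage S B R L').H.sup id

variable (S B R) in
noncomputable def prevSums (L : Finset (ℕ → D)) : Finset (D × D) :=
  (L.ssubsets.filter Finset.Nonempty).biUnion fun L' => (stage S B R L').sums

theorem stage_eq (L : Finset (ℕ → D)) :
    stage S B R L = Stage.next S B R (prevMax S B R L) (prevSums S B R L) L := by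
  rw [stage, prevMax, prevSums]
  congr 1
  · exact sup_attach _ fun L' => (stage S B R L').H.sup id
  · exact attach_biUnion (f := fun L' => (stage S B R L').sums)

theorem stage_sums (L : Finset (ℕ → D)) :
    (stage S B R L).sums =
      extendSums (stage S B R L).a (stage S B R L).H (prevSums S B R L) L := by
  rw [stage_eq]
  rfl

theorem isStep_stage
    (hB : AdmitsSteps S B R) (L : Finset (ℕ → D)) (hL : ValidL S L) :
    IsStep S B R (prevMax S B R L) (prevSums S B R L) L (stage S B R L).a (stage S B R L).H := by
  induction L using Finset.strongInduction with | H L ih =>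
  rw [stage_eq]
  refine isStep_next (hB _ _ L ?_ hL)
  simp only [prevSums, mem_biUnion, mem_filter, mem_ssubsets]
  rintro x ⟨L', ⟨hL'L, hL'⟩, hx⟩
  have hvalid : ValidL S L' := ⟨hL', fun g hg => hL.2 g (hL'L.subset hg)⟩
  rw [stage_sums] at hx
  exact (ih L' hL'L hvalid).forall_mem_extendSums x hx

theorem forall_mem_stage_sums (hB : AdmitsSteps S B R) {L : Finset (ℕ → D)} (hL : ValidL S L) :
    ∀ y ∈ (stage S B R L).sums, ∀ f ∈ R, y.1 + eval y.2 f ∈ B := by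
  rw [stage_sums]
  exact (isStep_stage hB L hL).forall_mem_extendSums

theorem lt_of_mem_stage_H
    (hB : AdmitsSteps S B R)
    {L₁ L₂ : Finset (ℕ → D)} (hL₂ : ValidL S L₂) (h : L₁ ⊂ L₂) {a b : ℕ}
    (ha : a ∈ (stage S B R L₁).H) (hb : b ∈ (stage S B R L₂).H) : a < b :=
  calc a ≤ (stage S B R L₁).H.sup id := le_sup (f := id) ha
    _ ≤ prevMax S B R L₂ := le_sup (f := fun L' => (stage S B R L').H.sup id) (mem_ssubsets.2 h)
    _ < b := (isStep_stage hB L₂ hL₂).2.2.1 b hb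

theorem mem_stage_sums_of_strictMono {n : ℕ} {L : Fin (n + 1) → Finset (ℕ → D)}
    (hL : StrictMono L) {g : Fin (n + 1) → ℕ → D} (hg : ∀ i, g i ∈ L i) :
    (∑ i, (stage S B R (L i)).a, ∑ i, ∑ t ∈ (stage S B R (L i)).H, g i t) ∈
      (stage S B R (L (Fin.last n))).sums := by
  induction n with
  | zero =>
    rw [stage_sums]
    simpa using mem_extendSums (mem_insert_self 0 _) (hg 0)
  | succ n ih =>
    have hprev := ih (hL.comp Fin.strictMono_castSucc) (fun i => hg i.castSucc)
    have hsub : (stage S B R (L (Fin.last n).castSucc)).sums ⊆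
        prevSums S B R (L (Fin.last (n + 1))) :=
      subset_biUnion_of_mem (fun L' => (stage S B R L').sums) <|
        mem_filter.2 ⟨mem_ssubsets.2 (hL (Fin.castSucc_lt_last _)), ⟨_, hg _⟩⟩
    rw [stage_sums]
    convert mem_extendSums (mem_insert_of_mem (hsub hprev)) (hg (Fin.last _)) using 2 <;>
      exact Fin.sum_univ_castSucc _

end Construction

end

theorem stmt12_general {D : Type*} [CommRing D] (S : Set D)
    (hadd : ∀ a ∈ S, ∀ b ∈ S, a + b ∈ S)
    (A : Set D) (hA : CpSet S hadd A)
    (R : Finset (Polynomial D)) (hR : R.Nonempty) (hR0 : ∀ f ∈ R, f.coeff 0 = 0) :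
    ∃ (α : Finset (ℕ → D) → D) (H : Finset (ℕ → D) → Finset ℕ),
      (∀ L, ValidL S L → α L ∈ S ∧ (H L).Nonempty) ∧
      (∀ L₁ L₂, ValidL S L₁ → ValidL S L₂ → L₁ ⊂ L₂ →
        ∀ a ∈ H L₁, ∀ b ∈ H L₂, a < b) ∧
      (∀ m : ℕ, 0 < m → ∀ L : Fin m → Finset (ℕ → D), (∀ i, ValidL S (L i)) →
        (∀ i j : Fin m, i < j → L i ⊂ L j) →
        ∀ g : Fin m → ℕ → D, (∀ i, g i ∈ L i) →
        ∀ f ∈ R,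
          (∑ i, α (L i)) +
            Polynomial.eval (∑ i, ∑ t ∈ H (L i), g i t) f ∈ A) := by
  obtain ⟨p, hp, hpJ, hpA⟩ := hA
  set U : Ultrafilter D := p.map (↑)
  have hU : U + U = U := hp.map_val_add_self
  have hJ (A' : Set D) (hA' : A' ∈ U) : JpSet S A' :=
    (hpJ _ hA').mono (Set.image_preimage_subset _ _)
  set B := starSet U A
  have hB : AdmitsSteps S B R :=
    admitsSteps hJ (starSet_mem hU hpA) (fun _ => eventually_add_mem_starSet hU) hR hR0
  refine ⟨fun L => (stage S B R L).a, fun L => (stage S B R L).H,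
    fun L hL => ⟨(isStep_stage hB L hL).1, (isStep_stage hB L hL).2.1⟩,
    fun L₁ L₂ _ hL₂ h a ha b hb => lt_of_mem_stage_H hB hL₂ h ha hb, ?_⟩
  rintro m hm L hL hchain g hg f hf
  obtain ⟨n, rfl⟩ := Nat.exists_eq_add_one_of_ne_zero hm.ne'
  exact (forall_mem_stage_sums hB (hL _) _ (mem_stage_sums_of_strictMono hchain hg) f hf).1

/-- polynomial extension of the central sets theorem. Let `D` be an
integral domain and `S ⊆ D` a nonempty set closed under addition with `0 ∉ S` whose
difference set is all of `D`. Let `A` be a `C_p`-set in `S` and `R` a nonempty finite set of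
integral polynomials on `D`. Then there are functions `α : P_f(ℕ → S) → S` and
`H : P_f(ℕ → S) → P_f(ℕ)` such that: (1) if `L₁ ⊊ L₂` then `max H(L₁) < min H(L₂)`; and
(2) for every chain `L₁ ⊊ ⋯ ⊊ L_m` and choices `g_i ∈ L_i`, and every `f ∈ R`,
`∑_{i=1}^m α(L_i) + f(∑_{i=1}^m ∑_{t ∈ H(L_i)} g_i(t)) ∈ A`. -/
theorem stmt12 {D : Type*} [CommRing D] [IsDomain D] (S : Set D)
    (hSne : S.Nonempty) (hadd : ∀ a ∈ S, ∀ b ∈ S, a + b ∈ S)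
    (h0 : (0 : D) ∉ S) (hdiff : ∀ d : D, ∃ a ∈ S, ∃ b ∈ S, d = a - b)
    (A : Set D) (hAS : A ⊆ S) (hA : CpSet S hadd A)
    (R : Finset (Polynomial D)) (hR : R.Nonempty) (hR0 : ∀ f ∈ R, f.coeff 0 = 0) :
    ∃ (α : Finset (ℕ → D) → D) (H : Finset (ℕ → D) → Finset ℕ),
      (∀ L, ValidL S L → α L ∈ S ∧ (H L).Nonempty) ∧
      (∀ L₁ L₂, ValidL S L₁ → ValidL S L₂ → L₁ ⊂ L₂ →
        ∀ a ∈ H L₁, ∀ b ∈ H L₂, a < b) ∧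
      (∀ m : ℕ, 0 < m → ∀ L : Fin m → Finset (ℕ → D), (∀ i, ValidL S (L i)) →
        (∀ i j : Fin m, i < j → L i ⊂ L j) →
        ∀ g : Fin m → ℕ → D, (∀ i, g i ∈ L i) →
        ∀ f ∈ R,
          (∑ i, α (L i)) +
            Polynomial.eval (∑ i, ∑ t ∈ H (L i), g i t) f ∈ A) :=
  stmt12_general S hadd A hA R hR hR0
end

section
/- Let p and q be ultrafilters on S. If every member of p is a J_p-set, then every member of p + q is a J_p-set and every member of q + p is a J_p-set (i.e. the set of ultrafilters all of whose members are J_p-sets is a two-sided ideal of the ultrafilter semigroup on S). -/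
/-- Let `D` be an integral domain and `S ⊆ D` a nonempty set closed under
addition with `0 ∉ S` whose difference set is all of `D`. If `p, q` are ultrafilters on `S`
and every member of `p` is a `J_p`-set, then every member of `p + q` and every member of
`q + p` is a `J_p`-set. -/
theorem stmt13 {D : Type*} [CommRing D] [IsDomain D] (S : Set D)
    (hSne : S.Nonempty) (hadd : ∀ a ∈ S, ∀ b ∈ S, a + b ∈ S)
    (h0 : (0 : D) ∉ S) (hdiff : ∀ d : D, ∃ a ∈ S, ∃ b ∈ S, d = a - b)
    (p q : Ultrafilter S)
    (hp : ∀ B ∈ p, JpSet S (Subtype.val '' B)) :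
    (∀ A : Set S, memSum hadd p q A → JpSet S (Subtype.val '' A)) ∧
    (∀ A : Set S, memSum hadd q p A → JpSet S (Subtype.val '' A)) := by
  constructor
  · intro A hA R hR hRc L hL hLS
    obtain ⟨a, haS, H, hHne, hfg⟩ := hp _ hA R hR hRc L hL hLS
    have key : ∀ f : Polynomial D, ∀ g : ℕ → D, ∃ x : S, f ∈ R → g ∈ L →
        {y : S | sAdd hadd x y ∈ A} ∈ q ∧
        (↑x : D) = a + Polynomial.eval (∑ t ∈ H, g t) f := by
      intro f g
      by_cases hfR : f ∈ R
      · by_cases hgL : g ∈ L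
        · obtain ⟨x, hx, hxe⟩ := hfg f hfR g hgL
          exact ⟨x, fun _ _ => ⟨hx, hxe⟩⟩
        · exact ⟨⟨hSne.choose, hSne.choose_spec⟩, fun _ h => absurd h hgL⟩
      · exact ⟨⟨hSne.choose, hSne.choose_spec⟩, fun h => absurd h hfR⟩
    choose x hx using key
    have hxq : ∀ f ∈ R, ∀ g ∈ L, {y : S | sAdd hadd (x f g) y ∈ A} ∈ q :=
      fun f hf g hg => (hx f g hf hg).1
    have hxe : ∀ f ∈ R, ∀ g ∈ L, (↑(x f g) : D) = a + Polynomial.eval (∑ t ∈ H, g t) f :=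
      fun f hf g hg => (hx f g hf hg).2
    have hq : (⋂ fg ∈ R ×ˢ L, {y : S | sAdd hadd (x fg.1 fg.2) y ∈ A}) ∈ q := by
      refine (Filter.biInter_finset_mem _).mpr ?_
      rintro ⟨f, g⟩ hfg'
      rw [Finset.mem_product] at hfg'
      exact hxq f hfg'.1 g hfg'.2
    obtain ⟨y, hy⟩ := Ultrafilter.nonempty_of_mem hq
    refine ⟨a + ↑y, hadd _ haS _ y.2, H, hHne, ?_⟩
    intro f hf g hg
    have hy' : sAdd hadd (x f g) y ∈ A := by
      have := Set.mem_iInter₂.mp hy (f, g) (Finset.mem_product.mpr ⟨hf, hg⟩)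
      exact this
    refine ⟨sAdd hadd (x f g) y, hy', ?_⟩
    show (↑(x f g) : D) + ↑y = a + ↑y + Polynomial.eval (∑ t ∈ H, g t) f
    rw [hxe f hf g hg]; ring
  · intro A hA R hR hRc L hL hLS
    obtain ⟨x, hx⟩ := Ultrafilter.nonempty_of_mem hA
    have hC : {y : S | sAdd hadd x y ∈ A} ∈ p := hx
    obtain ⟨a, haS, H, hHne, hfg⟩ := hp _ hC R hR hRc L hL hLS
    refine ⟨↑x + a, hadd _ x.2 _ haS, H, hHne, ?_⟩
    intro f hf g hg
    obtain ⟨y, hy, hye⟩ := hfg f hf g hg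
    refine ⟨sAdd hadd x y, hy, ?_⟩
    show (↑x : D) + ↑y = ↑x + a + Polynomial.eval (∑ t ∈ H, g t) f
    rw [hye]; ring
end

section
/- Let A be a J_p-set in (ℕ,+) and let B be a finite subset of ℕ. Then A ∖ B is a J_p-set in (ℕ,+). -/
/- Here the positive integers are encoded inside Lean's `ℕ` via positivity conditions.
`ℙ_ℕ` is encoded as the set of `p : Polynomial ℕ` with `p ≠ 0` and `p.coeff 0 = 0`
(nonzero polynomials with coefficients in `ℕ ∪ {0}` and zero constant term). -/

/-- `A ⊆ ℕ⁺` is a `J_p`-set in `(ℕ,+)` (`ℕ` the positive integers): for every nonempty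
finite `R ⊆ ℙ_ℕ` and every nonempty finite set `L` of functions `g : ℕ → ℕ⁺` there are a
positive `a` and a nonempty finite `H ⊆ ℕ` with `a + f(∑_{t ∈ H} g(t)) ∈ A` for every
`f ∈ R` and `g ∈ L`. -/
def JpSetN (A : Set ℕ) : Prop :=
  ∀ R : Finset (Polynomial ℕ), R.Nonempty → (∀ f ∈ R, f ≠ 0 ∧ f.coeff 0 = 0) →
    ∀ L : Finset (ℕ → ℕ), L.Nonempty → (∀ g ∈ L, ∀ n, 0 < g n) →
      ∃ a : ℕ, 0 < a ∧ ∃ H : Finset ℕ, H.Nonempty ∧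
        ∀ f ∈ R, ∀ g ∈ L, a + Polynomial.eval (∑ t ∈ H, g t) f ∈ A

/-!
Cut ℕ into consecutive blocks of length `N` and replace each `g ∈ L` by its block sums, which
are at least `N` since `g ≥ 1`. A witness `H` for the block sums pulls back to the union of the
blocks indexed by `H`, with the same sums `∑ g`, now at least `N`. A polynomial in `ℙ_ℕ` does
not decrease a positive argument, so taking `N` above `max B` keeps every `a + f (∑ g)` out
of `B`.
-/

open Finset Polynomial

namespace Polynomial

lemma eval_pos_of_ne_zero {q : ℕ[X]} (hq : q ≠ 0) {s : ℕ} (hs : 0 < s) : 0 < q.eval s := by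
  obtain ⟨n, hn⟩ : ∃ n, q.coeff n ≠ 0 := by
    by_contra! h
    exact hq (Polynomial.ext h)
  calc 0 < q.coeff n * s ^ n := by positivity
    _ ≤ q.eval s := by
      rw [eval_eq_sum_range]
      exact single_le_sum (f := fun i => q.coeff i * s ^ i) (fun _ _ => Nat.zero_le _)
        (mem_range.2 (Nat.lt_succ_of_le (le_natDegree_of_ne_zero hn)))

lemma le_eval_self {p : ℕ[X]} (hp : p ≠ 0) (h0 : p.coeff 0 = 0) {s : ℕ} (hs : 0 < s) :
    s ≤ p.eval s := by
  obtain ⟨q, rfl⟩ := X_dvd_iff.2 h0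
  have hq : q ≠ 0 := right_ne_zero_of_mul hp
  simpa [eval_mul] using Nat.le_mul_of_pos_right s (eval_pos_of_ne_zero hq hs)

end Polynomial

lemma pairwiseDisjoint_Ico_mul (N : ℕ) :
    (Set.univ : Set ℕ).PairwiseDisjoint fun t => Ico (N * t) (N * t + N) := by
  have block_le {t t' : ℕ} (h : t < t') : N * t + N ≤ N * t' := by
    simpa [mul_add] using Nat.mul_le_mul_left N h
  intro t₁ _ t₂ _ hne
  simp only [Function.onFun, disjoint_left, mem_Ico]
  intro x hx₁ hx₂
  rcases lt_or_gt_of_ne hne with h | h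
  · have := block_le h; omega
  · have := block_le h; omega

lemma JpSetN.exists_lt_sum {A : Set ℕ} (hA : JpSetN A) (N : ℕ) {R : Finset ℕ[X]}
    (hR : R.Nonempty) (hRc : ∀ f ∈ R, f ≠ 0 ∧ f.coeff 0 = 0) {L : Finset (ℕ → ℕ)}
    (hL : L.Nonempty) (hLpos : ∀ g ∈ L, ∀ n, 0 < g n) :
    ∃ a, 0 < a ∧ ∃ H : Finset ℕ, H.Nonempty ∧
      ∀ f ∈ R, ∀ g ∈ L, a + eval (∑ t ∈ H, g t) f ∈ A ∧ N < ∑ t ∈ H, g t := by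
  classical
  let block (t : ℕ) : Finset ℕ := Ico ((N + 1) * t) ((N + 1) * t + (N + 1))
  let blockSum (g : ℕ → ℕ) (t : ℕ) : ℕ := ∑ i ∈ block t, g i
  have lt_blockSum : ∀ g ∈ L, ∀ t, N < blockSum g t := fun g hg t => by
    simpa [block] using card_nsmul_le_sum (block t) g 1 fun i _ => hLpos g hg i
  obtain ⟨a, ha, H, hH, hmem⟩ := hA R hR hRc (L.image blockSum) (hL.image _) <| by
    simp only [mem_image, forall_exists_index, and_imp, forall_apply_eq_imp_iff₂]
    exact fun g hg t => Nat.zero_lt_of_lt (lt_blockSum g hg t)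
  have sum_blocks (g : ℕ → ℕ) : ∑ x ∈ H.biUnion block, g x = ∑ t ∈ H, blockSum g t :=
    sum_biUnion ((pairwiseDisjoint_Ico_mul _).subset (Set.subset_univ _))
  refine ⟨a, ha, H.biUnion block, hH.biUnion fun t _ => nonempty_Ico.2 (by omega),
    fun f hf g hg => ?_⟩
  rw [sum_blocks]
  refine ⟨hmem f hf _ (mem_image_of_mem _ hg), ?_⟩
  obtain ⟨t, ht⟩ := hH
  exact (lt_blockSum g hg t).trans_le (single_le_sum (fun _ _ => Nat.zero_le _) ht)

theorem stmt16_general (A : Set ℕ) (hJp : JpSetN A)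
    (B : Set ℕ) (hB : B.Finite) :
    JpSetN (A \ B) := by
  intro R hR hRc L hL hLpos
  obtain ⟨M, hM⟩ := hB.bddAbove
  obtain ⟨a, ha, H, hH, hmem⟩ := hJp.exists_lt_sum M hR hRc hL hLpos
  refine ⟨a, ha, H, hH, fun f hf g hg => ⟨(hmem f hf g hg).1, fun hbB => ?_⟩⟩
  have hlarge := (hmem f hf g hg).2
  have := le_eval_self (hRc f hf).1 (hRc f hf).2 (Nat.zero_lt_of_lt hlarge)
  have := hM hbB
  omega

/-- If `A` is a `J_p`-set in `(ℕ,+)` (`ℕ` the positive integers) and `B`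
is a finite subset of `ℕ`, then `A \ B` is a `J_p`-set. -/
theorem stmt16 (A : Set ℕ) (hA : ∀ n ∈ A, 0 < n) (hJp : JpSetN A)
    (B : Set ℕ) (hBpos : ∀ n ∈ B, 0 < n) (hB : B.Finite) :
    JpSetN (A \ B) :=
  stmt16_general A hJp B hB
end

section
/- Let κ be an infinite regular cardinal, suppose S has cardinality κ, and suppose the multiplicative semigroup (D ∖ {0}, ·) is very weakly cancellative, i.e. every union of fewer than κ sets of the form {x ∈ D ∖ {0} : a·x = b} (with a, b ∈ D ∖ {0}) has cardinality less than κ. Then every PP-rich subset of S has cardinality κ. -/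
/-- `A` is PP-rich in `S ⊆ D`: for every nonempty finite set `R` of integral polynomials on
`D` (one-variable polynomials with zero constant term) there are `a, x ∈ S` with
`a + f(x) ∈ A` for every `f ∈ R`. -/
def PPRich {D : Type*} [CommRing D] (S A : Set D) : Prop :=
  ∀ R : Finset (Polynomial D), R.Nonempty → (∀ f ∈ R, f.coeff 0 = 0) →
    ∃ a ∈ S, ∃ x ∈ S, ∀ f ∈ R, a + Polynomial.eval x f ∈ A

/-- Let `D` be an integral domain and `S ⊆ D` a nonempty set closed under
addition with `0 ∉ S` whose difference set is all of `D`. Suppose `S` has infinite regular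
cardinality `κ`, and `(D ∖ {0}, ·)` is very weakly cancellative: every union of fewer than
`κ` multiplicative solution sets `{x ∈ D ∖ {0} : a·x = b}` (with `a, b ∈ D ∖ {0}`) has
cardinality `< κ`. Then every PP-rich subset of `S` has cardinality `κ`. -/
theorem stmt18 {D : Type} [CommRing D] [IsDomain D] (S : Set D)
    (hSne : S.Nonempty) (hadd : ∀ a ∈ S, ∀ b ∈ S, a + b ∈ S)
    (h0 : (0 : D) ∉ S) (hdiff : ∀ d : D, ∃ a ∈ S, ∃ b ∈ S, d = a - b)
    (hreg : (Cardinal.mk S).IsRegular)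
    (hvwc : ∀ P : Set (D × D), (∀ z ∈ P, z.1 ≠ 0 ∧ z.2 ≠ 0) →
      Cardinal.mk P < Cardinal.mk S →
      Cardinal.mk (⋃ z ∈ P, {x : D | x ≠ 0 ∧ z.1 * x = z.2}) < Cardinal.mk S)
    (A : Set D) (hAS : A ⊆ S) (hA : PPRich S A) :
    Cardinal.mk A = Cardinal.mk S := by
  classical
  refine le_antisymm (Cardinal.mk_le_mk_of_subset hAS) (not_lt.1 fun hlt => ?_)
  set Q : Set D := ((fun z : D × D => z.1 - z.2) '' (A ×ˢ A)) \ {0} with hQdef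
  have hQlt : Cardinal.mk Q < Cardinal.mk S := by
    calc Cardinal.mk Q
        ≤ Cardinal.mk ((fun z : D × D => z.1 - z.2) '' (A ×ˢ A)) :=
          Cardinal.mk_le_mk_of_subset Set.diff_subset
      _ ≤ Cardinal.mk (A ×ˢ A : Set (D × D)) := Cardinal.mk_image_le
      _ = Cardinal.mk A * Cardinal.mk A := by
          rw [Cardinal.mk_congr (Equiv.Set.prod A A), Cardinal.mk_prod]; simp
      _ < Cardinal.mk S := Cardinal.mul_lt_of_lt hreg.aleph0_le hlt hlt
  set P : Set (D × D) := Q ×ˢ Q with hPdef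
  have hP0 : ∀ z ∈ P, z.1 ≠ 0 ∧ z.2 ≠ 0 := by
    rintro z ⟨hz1, hz2⟩
    exact ⟨hz1.2, hz2.2⟩
  have hPlt : Cardinal.mk P < Cardinal.mk S := by
    calc Cardinal.mk P = Cardinal.mk Q * Cardinal.mk Q := by
          rw [hPdef, Cardinal.mk_congr (Equiv.Set.prod Q Q), Cardinal.mk_prod]; simp
      _ < Cardinal.mk S := Cardinal.mul_lt_of_lt hreg.aleph0_le hQlt hQlt
  have hU := hvwc P hP0 hPlt
  obtain ⟨s, hsS, hsU⟩ : ∃ s ∈ S, s ∉ ⋃ z ∈ P, {x : D | x ≠ 0 ∧ z.1 * x = z.2} := by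
    by_contra h
    push_neg at h
    exact absurd (Cardinal.mk_le_mk_of_subset h) (not_le.2 hU)
  obtain ⟨a, haS, x, hxS, hw⟩ :=
    hA {0, Polynomial.X, Polynomial.C s * Polynomial.X} ⟨0, by simp⟩
      (by
        intro f hf
        simp only [Finset.mem_insert, Finset.mem_singleton] at hf
        rcases hf with rfl | rfl | rfl <;> simp)
  have ha : a ∈ A := by
    have := hw 0 (by simp)
    simpa using this
  have hax : a + x ∈ A := by
    have := hw Polynomial.X (by simp)
    simpa using this
  have hasx : a + s * x ∈ A := by
    have := hw (Polynomial.C s * Polynomial.X) (by simp)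
    simpa using this
  have hx0 : x ≠ 0 := fun h => h0 (h ▸ hxS)
  have hs0 : s ≠ 0 := fun h => h0 (h ▸ hsS)
  have hxQ : x ∈ Q := by
    refine ⟨⟨(a + x, a), ⟨hax, ha⟩, by ring⟩, ?_⟩
    simpa using hx0
  have hsxQ : s * x ∈ Q := by
    refine ⟨⟨(a + s * x, a), ⟨hasx, ha⟩, by ring⟩, ?_⟩
    simpa using mul_ne_zero hs0 hx0
  apply hsU
  refine Set.mem_biUnion (show ((x, s * x) : D × D) ∈ P from ⟨hxQ, hsxQ⟩) ?_
  exact ⟨hs0, mul_comm x s⟩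
end

section
/- Let A be a PP-rich subset of (ℕ,+). Then: (1) there is a family ⟨B_α⟩_{α < 2^{ℵ₀}} of 2^{ℵ₀} subsets of A such that each B_α is an infinite PP-rich set and B_α ∩ B_β is finite whenever α ≠ β; and (2) A can be partitioned into countably infinitely many pairwise disjoint sets, each of which is PP-rich. -/
/-!
There are only countably many nonempty finite families `R ⊆ ℙ_ℕ`, and replacing `R` by
`(N + 1) X + R` shows that a PP-rich set contains patterns `a + R(x)` with `a` arbitrarily large.
Choosing each pattern above all earlier ones gives, for any countable index set, pairwise
disjoint finite blocks in `A` realising prescribed families. For the partition, block `(n, j)`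
realises the `j`-th family and goes to the `n`-th class, uncovered points going to class `0`.
For the almost disjoint family, the blocks are indexed by the nodes `(α ∩ [0, m), m)` of the
binary tree, the node at level `m` realising the `m`-th family: `B α` collects the blocks along
the branch of `α`, and two distinct branches share only finitely many nodes.
-/

/- Here the positive integers are encoded inside Lean's `ℕ` via positivity conditions.
`ℙ_ℕ` is encoded as the set of `p : Polynomial ℕ` with `p ≠ 0` and `p.coeff 0 = 0`
(nonzero polynomials with coefficients in `ℕ ∪ {0}` and zero constant term). -/

/-- `A ⊆ ℕ⁺` is PP-rich in `(ℕ,+)` (`ℕ` the positive integers): for every nonempty finite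
`R ⊆ ℙ_ℕ` there are positive `a, x` with `a + f(x) ∈ A` for every `f ∈ R`. -/
def PPRichN (A : Set ℕ) : Prop :=
  ∀ R : Finset (Polynomial ℕ), R.Nonempty → (∀ f ∈ R, f ≠ 0 ∧ f.coeff 0 = 0) →
    ∃ a : ℕ, 0 < a ∧ ∃ x : ℕ, 0 < x ∧ ∀ f ∈ R, a + Polynomial.eval x f ∈ A

open Polynomial Set Function

instance {R : Type*} [Semiring R] [Countable R] : Countable R[X] :=
  ((toFinsuppIso R).toEquiv.trans AddMonoidAlgebra.coeffEquiv).injective.countable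

theorem exists_pairwise_disjoint_of_forall_exists_gt_nat {P : ℕ → Finset ℕ → Prop}
    (h : ∀ k N, ∃ s, P k s ∧ ∀ m ∈ s, N < m) :
    ∃ S : ℕ → Finset ℕ, Pairwise (Disjoint on S) ∧ ∀ k, P k (S k) := by
  choose g hgP hgN using h
  -- `S k` is chosen above `b k`, the largest element of the earlier blocks.
  let b : ℕ → ℕ := fun k => Nat.rec 0 (fun k bk => max bk ((g k bk).sup id)) k
  have hb : Monotone b := monotone_nat_of_le_succ fun k => le_max_left _ _
  have hIoc : ∀ k, ↑(g k (b k)) ⊆ Ioc (b k) (b (k + 1)) := fun k m hm =>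
    ⟨hgN k _ m hm, le_max_of_le_right (Finset.le_sup (f := id) hm)⟩
  exact ⟨fun k => g k (b k),
    fun j k hjk =>
      Finset.disjoint_coe.1 ((hb.pairwise_disjoint_on_Ioc_succ hjk).mono (hIoc j) (hIoc k)),
    fun k => hgP _ _⟩

theorem exists_pairwise_disjoint_of_forall_exists_gt {ι : Type*} [Countable ι]
    {P : ι → Finset ℕ → Prop} (h : ∀ i N, ∃ s, P i s ∧ ∀ m ∈ s, N < m) :
    ∃ S : ι → Finset ℕ, Pairwise (Disjoint on S) ∧ ∀ i, P i (S i) := by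
  obtain ⟨e, he⟩ := exists_injective_nat ι
  have h' : ∀ k N, ∃ s, (∀ i, e i = k → P i s) ∧ ∀ m ∈ s, N < m := by
    intro k N
    by_cases hk : ∃ i, e i = k
    · obtain ⟨i, rfl⟩ := hk
      obtain ⟨s, hs, hN⟩ := h i N
      exact ⟨s, fun i' hi' => he hi' ▸ hs, hN⟩
    · exact ⟨∅, fun i hi => (hk ⟨i, hi⟩).elim, by simp⟩
  obtain ⟨S, hS, hP⟩ := exists_pairwise_disjoint_of_forall_exists_gt_nat h'
  exact ⟨S ∘ e, hS.comp_of_injective he, fun i => hP _ i rfl⟩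

theorem exists_partition_of_pairwise_disjoint {α : Type*} {A : Set α} {D : ℕ → Set α}
    (hD : Pairwise (Disjoint on D)) (hDA : ∀ n, D n ⊆ A) :
    ∃ C : ℕ → Set α, (⋃ n, C n) = A ∧ Pairwise (Disjoint on C) ∧ ∀ n, D n ⊆ C n := by
  set E := A \ ⋃ k, D k
  have hE : ∀ n, Disjoint E (D n) := fun n => disjoint_sdiff_left.mono_right (subset_iUnion D n)
  let C : ℕ → Set α := fun n => if n = 0 then D 0 ∪ E else D n
  refine ⟨C, ?_, ?_, fun n => ?_⟩
  · refine Subset.antisymm (iUnion_subset fun n => ?_) fun x hx => ?_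
    · simp only [C]
      split_ifs with hn
      exacts [union_subset (hDA 0) sdiff_subset, hDA n]
    · by_cases hxD : x ∈ ⋃ k, D k
      · obtain ⟨k, hk⟩ := mem_iUnion.1 hxD
        refine mem_iUnion.2 ⟨k, ?_⟩
        simp only [C]
        split_ifs with h
        exacts [Or.inl (h ▸ hk), hk]
      · exact mem_iUnion.2 ⟨0, by simp [C, hx, hxD, E]⟩
  · intro m n hmn
    rcases eq_or_ne m 0 with rfl | hm
    · simp only [onFun, C, if_pos, if_neg hmn.symm]
      exact (hD hmn).union_left (hE n)
    rcases eq_or_ne n 0 with rfl | hn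
    · simp only [onFun, C, if_pos, if_neg hm]
      exact (hD hmn).union_right (hE m).symm
    · simp only [onFun, C, if_neg hm, if_neg hn]
      exact hD hmn
  · simp only [C]
    split_ifs with hn
    exacts [hn ▸ subset_union_left, subset_rfl]

open scoped Classical in
noncomputable def initialSegment (α : Set ℕ) (m : ℕ) : Finset ℕ × ℕ :=
  ({i ∈ Finset.range m | i ∈ α}, m)

theorem finite_range_initialSegment_inter {α β : Set ℕ} (h : α ≠ β) :
    (range (initialSegment α) ∩ range (initialSegment β)).Finite := by
  obtain ⟨i, hi⟩ : ∃ i, ¬(i ∈ α ↔ i ∈ β) := by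
    by_contra! h'
    exact h (Set.ext h')
  refine ((finite_Iic i).image (initialSegment α)).subset ?_
  rintro _ ⟨⟨m, rfl⟩, n, hn⟩
  obtain rfl : m = n := (congrArg Prod.snd hn).symm
  refine ⟨m, mem_Iic.2 (not_lt.1 fun him => hi ?_), rfl⟩
  simpa [initialSegment, him] using Finset.ext_iff.1 (congrArg Prod.fst hn) i |>.symm

theorem finite_iUnion_initialSegment_inter {γ : Type*} {S : Finset ℕ × ℕ → Finset γ}
    (hS : Pairwise (Disjoint on S)) {α β : Set ℕ} (h : α ≠ β) :
    ((⋃ m, (S (initialSegment α m) : Set γ)) ∩ ⋃ m, (S (initialSegment β m) : Set γ)).Finite := by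
  refine ((finite_range_initialSegment_inter h).biUnion fun p _ => (S p).finite_toSet).subset ?_
  rintro x ⟨hxα, hxβ⟩
  obtain ⟨m, hm⟩ := mem_iUnion.1 hxα
  obtain ⟨n, hn⟩ := mem_iUnion.1 hxβ
  have heq : initialSegment α m = initialSegment β n := by
    by_contra hne
    exact Finset.disjoint_left.1 (hS hne) hm hn
  exact mem_biUnion ⟨⟨m, rfl⟩, n, heq.symm⟩ hm

def ContainsPattern (R : Finset ℕ[X]) (s : Set ℕ) : Prop :=
  ∃ a, 0 < a ∧ ∃ x, 0 < x ∧ ∀ f ∈ R, a + f.eval x ∈ s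

theorem ContainsPattern.mono {R : Finset ℕ[X]} {s t : Set ℕ} (h : ContainsPattern R s)
    (hst : s ⊆ t) : ContainsPattern R t :=
  let ⟨a, ha, x, hx, hs⟩ := h
  ⟨a, ha, x, hx, fun f hf => hst (hs f hf)⟩

abbrev PPFamily : Type := {R : Finset ℕ[X] // R.Nonempty ∧ ∀ f ∈ R, f ≠ 0 ∧ f.coeff 0 = 0}

instance : Nonempty PPFamily := ⟨⟨{X}, Finset.singleton_nonempty _, by simp⟩⟩

theorem ppRichN_iff {A : Set ℕ} : PPRichN A ↔ ∀ R : PPFamily, ContainsPattern R.1 A :=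
  ⟨fun h R => h R.1 R.2.1 R.2.2, fun h R hne hR => h ⟨R, hne, hR⟩⟩

noncomputable def PPFamily.addLeft (R : PPFamily) (g : ℕ[X]) (hg : g.coeff 0 = 0) : PPFamily :=
  ⟨R.1.image (g + ·), R.2.1.image _, by
    simp only [Finset.forall_mem_image]
    intro f hf
    obtain ⟨hf0, hfc⟩ := R.2.2 f hf
    refine ⟨fun h => hf0 (Polynomial.ext fun n => ?_), by simp [hg, hfc]⟩
    have hn := congrArg (coeff · n) h
    simp only [coeff_add, coeff_zero, Nat.add_eq_zero_iff] at hn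
    exact hn.2⟩

theorem PPRichN.exists_pattern_gt {A : Set ℕ} (hA : PPRichN A) (R : PPFamily) (N : ℕ) :
    ∃ a, N < a ∧ ∃ x, 0 < x ∧ ∀ f ∈ R.1, a + f.eval x ∈ A := by
  -- a pattern of `(N + 1) X + R` at `a` is a pattern of `R` at `a + (N + 1) x > N`
  obtain ⟨a, -, x, hx, haA⟩ := ppRichN_iff.1 hA (R.addLeft (C (N + 1) * X) (by simp))
  refine ⟨a + (N + 1) * x, by nlinarith, x, hx, fun f hf => ?_⟩
  simpa [add_assoc] using haA _ (Finset.mem_image_of_mem _ hf)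

theorem PPRichN.infinite {A : Set ℕ} (hA : PPRichN A) : A.Infinite := by
  refine infinite_of_forall_exists_gt fun N => ?_
  obtain ⟨R⟩ : Nonempty PPFamily := inferInstance
  obtain ⟨f, hf⟩ := R.2.1
  obtain ⟨a, hNa, x, -, haA⟩ := hA.exists_pattern_gt R N
  exact ⟨_, haA f hf, by omega⟩

theorem PPRichN.exists_pairwise_disjoint_patterns {ι : Type*} [Countable ι] {A : Set ℕ}
    (hA : PPRichN A) (F : ι → PPFamily) :
    ∃ S : ι → Finset ℕ, Pairwise (Disjoint on S) ∧
      ∀ i, ↑(S i) ⊆ A ∧ ContainsPattern (F i).1 ↑(S i) := by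
  refine exists_pairwise_disjoint_of_forall_exists_gt
    (P := fun i s => ↑s ⊆ A ∧ ContainsPattern (F i).1 ↑s) fun i N => ?_
  obtain ⟨a, hNa, x, hx, haA⟩ := hA.exists_pattern_gt (F i) N
  refine ⟨(F i).1.image (a + ·.eval x),
    ⟨?_, a, by omega, x, hx, fun f hf => Finset.mem_image_of_mem _ hf⟩, ?_⟩
  · simpa [Set.subset_def] using haA
  · simp only [Finset.mem_image]
    rintro _ ⟨f, -, rfl⟩
    omega

theorem PPRichN.exists_almost_disjoint_family {A : Set ℕ} (hA : PPRichN A) :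
    ∃ B : Set ℕ → Set ℕ, Injective B ∧ (∀ α, B α ⊆ A ∧ (B α).Infinite ∧ PPRichN (B α)) ∧
      ∀ α β, α ≠ β → (B α ∩ B β).Finite := by
  obtain ⟨ρ, hρ⟩ := exists_surjective_nat PPFamily
  obtain ⟨S, hS, hSA⟩ := hA.exists_pairwise_disjoint_patterns fun p : Finset ℕ × ℕ => ρ p.2
  let B α := ⋃ m, (S (initialSegment α m) : Set ℕ)
  have hrich : ∀ α, PPRichN (B α) := fun α => ppRichN_iff.2 <| hρ.forall.2 fun m =>
    (hSA _).2.mono (subset_iUnion (fun m => (S (initialSegment α m) : Set ℕ)) m)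
  have hfin : ∀ α β, α ≠ β → (B α ∩ B β).Finite := fun α β =>
    finite_iUnion_initialSegment_inter hS
  refine ⟨B, fun α β hαβ => ?_,
    fun α => ⟨iUnion_subset fun m => (hSA _).1, (hrich α).infinite, hrich α⟩, hfin⟩
  by_contra hne
  have hαα := hfin α β hne
  rw [hαβ, inter_self] at hαα
  exact (hrich β).infinite hαα

theorem PPRichN.exists_partition {A : Set ℕ} (hA : PPRichN A) :
    ∃ C : ℕ → Set ℕ, (⋃ n, C n) = A ∧ (∀ m n : ℕ, m ≠ n → Disjoint (C m) (C n)) ∧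
      ∀ n, PPRichN (C n) := by
  obtain ⟨ρ, hρ⟩ := exists_surjective_nat PPFamily
  obtain ⟨S, hS, hSA⟩ := hA.exists_pairwise_disjoint_patterns fun p : ℕ × ℕ => ρ p.2
  let D n := ⋃ j, (S (n, j) : Set ℕ)
  have hD : Pairwise (Disjoint on D) := fun m n hmn =>
    disjoint_iUnion_left.2 fun j => disjoint_iUnion_right.2 fun k =>
      Finset.disjoint_coe.2 (hS fun h => hmn (congrArg Prod.fst h))
  obtain ⟨C, hCA, hC, hDC⟩ :=
    exists_partition_of_pairwise_disjoint hD fun n => iUnion_subset fun j => (hSA _).1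
  refine ⟨C, hCA, fun m n hmn => hC hmn, fun n => ppRichN_iff.2 <| hρ.forall.2 fun j => ?_⟩
  exact (hSA (n, j)).2.mono ((subset_iUnion (fun j => (S (n, j) : Set ℕ)) j).trans (hDC n))

theorem stmt19_general (A : Set ℕ) (hPP : PPRichN A) :
    (∃ B : Set ℕ → Set ℕ,
      Function.Injective B ∧
      (∀ α, B α ⊆ A ∧ (B α).Infinite ∧ PPRichN (B α)) ∧
      (∀ α β, α ≠ β → (B α ∩ B β).Finite)) ∧
    (∃ C : ℕ → Set ℕ, (⋃ n, C n) = A ∧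
      (∀ m n : ℕ, m ≠ n → Disjoint (C m) (C n)) ∧
      ∀ n, PPRichN (C n)) :=
  ⟨hPP.exists_almost_disjoint_family, hPP.exists_partition⟩

/-- Let `A` be a PP-rich subset of `(ℕ,+)` (`ℕ` the positive integers).
Then (1) `A` contains a family of `2^ℵ₀` (indexed by `Set ℕ`) almost disjoint infinite
PP-rich subsets, and (2) `A` can be partitioned into countably infinitely many pairwise
disjoint PP-rich sets. -/
theorem stmt19 (A : Set ℕ) (hA : ∀ n ∈ A, 0 < n) (hPP : PPRichN A) :
    (∃ B : Set ℕ → Set ℕ,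
      Function.Injective B ∧
      (∀ α, B α ⊆ A ∧ (B α).Infinite ∧ PPRichN (B α)) ∧
      (∀ α β, α ≠ β → (B α ∩ B β).Finite)) ∧
    (∃ C : ℕ → Set ℕ, (⋃ n, C n) = A ∧
      (∀ m n : ℕ, m ≠ n → Disjoint (C m) (C n)) ∧
      ∀ n, PPRichN (C n)) :=
  stmt19_general A hPP
end
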